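/- arXiv:2506.05704 — 8 statements merged into one kernel-verified Lean document; each statement's English description precedes it below -/
import Mathlib

section
/- If F ⊆ 2^[n] is a t-intersecting family (any two members meet in at least t elements), then for every ℓ ≥ 0 the number of members of F of size exactly t + ℓ is at most C(n, ℓ). -/
open Finset UV
open scoped FinsetFamily symmDiff

namespace Stmt3Aux
variable {n : ℕ}

def I (n m : ℕ) : Finset (Fin n) := univ.filter (fun x => (x : ℕ) < m)

lemma mem_I {m : ℕ} {x : Fin n} : x ∈ I n m ↔ (x:ℕ) < m := by simp [I]

lemma card_I {m : ℕ} (h : m ≤ n) : #(I n m) = m := by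
  have : I n m = (Finset.range m).attachFin (fun x hx => (mem_range.1 hx).trans_le h) := by
    ext x; simp [I, mem_attachFin]
  rw [this, card_attachFin, card_range]

lemma I_subset {m m' : ℕ} (h : m ≤ m') : I n m ⊆ I n m' := by
  intro x hx; rw [mem_I] at *; omega

lemma card_filter_lt_emb {k : ℕ} (s : Finset (Fin n)) (h : #s = k) (j : Fin k) :
    #(s.filter (fun x => x < s.orderEmbOfFin h j)) = (j : ℕ) := by
  classical
  rw [← card_I (n := k) (m := (j:ℕ)) j.2.le]
  symm
  apply Finset.card_bij (fun (i : Fin k) _ => s.orderEmbOfFin h i)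
  · intro i hi
    rw [mem_I] at hi
    simp only [mem_filter]
    exact ⟨s.orderEmbOfFin_mem h i, (s.orderEmbOfFin h).lt_iff_lt.2 (by exact hi)⟩
  · intro i _ i' _ hii'
    exact (s.orderEmbOfFin h).injective hii'
  · intro x hx
    rw [mem_filter] at hx
    have : x ∈ Set.range (s.orderEmbOfFin h) := by
      rw [s.range_orderEmbOfFin h]; exact hx.1
    obtain ⟨i, rfl⟩ := this
    exact ⟨i, by rw [mem_I]; exact (s.orderEmbOfFin h).lt_iff_lt.1 hx.2, rfl⟩

lemma emb_lt_of_card_filter {k : ℕ} (s : Finset (Fin n)) (h : #s = k) (j : Fin k) {b : Fin n}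
    (hb : (j : ℕ) + 1 ≤ #(s.filter (fun x => x < b))) : s.orderEmbOfFin h j < b := by
  by_contra hle
  push_neg at hle
  have hsub : s.filter (fun x => x < b) ⊆ s.filter (fun x => x < s.orderEmbOfFin h j) :=
    filter_subset_filter _ (by intro x hx; exact hx) |>.trans (by
      intro x hx; rw [mem_filter] at *; exact ⟨hx.1, lt_of_lt_of_le hx.2 hle⟩)
  have := card_le_card hsub
  rw [card_filter_lt_emb] at this
  omega

lemma le_emb_of_card_filter {k : ℕ} (s : Finset (Fin n)) (h : #s = k) (j : Fin k) {m : ℕ}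
    (hm : #(s.filter (fun x : Fin n => (x:ℕ) < m)) ≤ (j : ℕ)) : m ≤ (s.orderEmbOfFin h j : ℕ) := by
  by_contra hlt
  push_neg at hlt
  have hsub : insert (s.orderEmbOfFin h j) (s.filter (fun x => x < s.orderEmbOfFin h j)) ⊆
      s.filter (fun x : Fin n => (x:ℕ) < m) := by
    intro x hx
    rw [mem_insert] at hx
    rcases hx with rfl | hx
    · exact mem_filter.2 ⟨s.orderEmbOfFin_mem h j, hlt⟩
    · rw [mem_filter] at *
      exact ⟨hx.1, by have := hx.2; omega⟩
  have hcard := card_le_card hsub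
  rw [card_insert_of_notMem (by simp), card_filter_lt_emb] at hcard
  omega



lemma compress_singleton {i j : Fin n} {X : Finset (Fin n)} (hi : i ∉ X) (hj : j ∈ X) :
    UV.compress {i} {j} X = insert i (X.erase j) := by
  rw [UV.compress_of_disjoint_of_le (by simpa using hi) (by simpa using hj)]
  have hij : i ≠ j := fun h => hi (h ▸ hj)
  ext x
  simp only [sup_eq_union, mem_sdiff, mem_union, mem_singleton, mem_insert, mem_erase]
  constructor
  · rintro ⟨hx1 | rfl, hx2⟩
    · exact Or.inr ⟨hx2, hx1⟩
    · exact Or.inl rfl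
  · rintro (rfl | ⟨hx1, hx2⟩)
    · exact ⟨Or.inr rfl, hij⟩
    · exact ⟨Or.inl hx2, hx1⟩

lemma tInt_compression (t : ℕ) (i j : Fin n) (𝒜 : Finset (Finset (Fin n)))
    (h : ∀ A ∈ 𝒜, ∀ B ∈ 𝒜, t ≤ #(A ∩ B)) :
    ∀ X ∈ 𝓒 {i} {j} 𝒜, ∀ Y ∈ 𝓒 {i} {j} 𝒜, t ≤ #(X ∩ Y) := by
  classical
  have hmix : ∀ X ∈ 𝒜, UV.compress {i} {j} X ∈ 𝒜 → ∀ A ∈ 𝒜, i ∉ A → j ∈ A →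
      t ≤ #(X ∩ insert i (A.erase j)) := by
    intro X hX hcX A hA hiA hjA
    by_cases hjX : j ∈ X
    · by_cases hiX : i ∈ X
      · have hEq : X ∩ insert i (A.erase j) = insert i ((X ∩ A).erase j) := by
          ext x
          simp only [mem_inter, mem_insert, mem_erase]
          constructor
          · rintro ⟨hxX, rfl | ⟨hxj, hxA⟩⟩
            · exact Or.inl rfl
            · exact Or.inr ⟨hxj, hxX, hxA⟩
          · rintro (rfl | ⟨hxj, hxX, hxA⟩)
            · exact ⟨hiX, Or.inl rfl⟩
            · exact ⟨hxX, Or.inr ⟨hxj, hxA⟩⟩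
        rw [hEq, card_insert_of_notMem (by simp [hiA]),
          card_erase_of_mem (mem_inter.2 ⟨hjX, hjA⟩)]
        have h1 := h X hX A hA
        have h2 : 1 ≤ #(X ∩ A) := card_pos.2 ⟨j, mem_inter.2 ⟨hjX, hjA⟩⟩
        omega
      · rw [compress_singleton hiX hjX] at hcX
        have key : X ∩ insert i (A.erase j) = (insert i (X.erase j)) ∩ A := by
          ext x
          simp only [mem_inter, mem_insert, mem_erase]
          constructor
          · rintro ⟨hxX, rfl | ⟨hxj, hxA⟩⟩
            · exact absurd hxX hiX
            · exact ⟨Or.inr ⟨hxj, hxX⟩, hxA⟩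
          · rintro ⟨rfl | ⟨hxj, hxX⟩, hxA⟩
            · exact absurd hxA hiA
            · exact ⟨hxX, Or.inr ⟨hxj, hxA⟩⟩
        rw [key]
        exact h _ hcX A hA
    · refine le_trans (h X hX A hA) (card_le_card ?_)
      intro x hx
      rw [mem_inter] at hx
      refine mem_inter.2 ⟨hx.1, mem_insert.2 (Or.inr (mem_erase.2 ⟨?_, hx.2⟩))⟩
      rintro rfl; exact hjX hx.1
  have hboth : ∀ A ∈ 𝒜, ∀ B ∈ 𝒜, i ∉ A → j ∈ A → i ∉ B → j ∈ B →
      t ≤ #(insert i (A.erase j) ∩ insert i (B.erase j)) := by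
    intro A hA B hB hiA hjA hiB hjB
    have hEq : insert i (A.erase j) ∩ insert i (B.erase j) = insert i ((A ∩ B).erase j) := by
      ext x
      simp only [mem_inter, mem_insert, mem_erase]
      tauto
    rw [hEq, card_insert_of_notMem (by simp [hiA]),
      card_erase_of_mem (mem_inter.2 ⟨hjA, hjB⟩)]
    have h1 := h A hA B hB
    have h2 : 1 ≤ #(A ∩ B) := card_pos.2 ⟨j, mem_inter.2 ⟨hjA, hjB⟩⟩
    omega
  have hcond : ∀ A ∈ 𝒜, UV.compress {i} {j} A ∉ 𝒜 → i ∉ A ∧ j ∈ A := by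
    intro A hA hcA
    by_contra hc
    refine hcA ?_
    have : UV.compress {i} {j} A = A := by
      rw [UV.compress, if_neg]
      rintro ⟨h1, h2⟩
      exact hc ⟨by simpa using h1, by simpa using h2⟩
    rwa [this]
  intro X hX Y hY
  rw [mem_compression] at hX hY
  rcases hX with ⟨hX1, hX2⟩ | ⟨hX1, A, hA, rfl⟩
  · rcases hY with ⟨hY1, hY2⟩ | ⟨hY1, B, hB, rfl⟩
    · exact h X hX1 Y hY1
    · obtain ⟨hiB, hjB⟩ := hcond B hB hY1
      rw [compress_singleton hiB hjB]
      exact hmix X hX1 hX2 B hB hiB hjB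
  · obtain ⟨hiA, hjA⟩ := hcond A hA hX1
    rw [compress_singleton hiA hjA]
    rcases hY with ⟨hY1, hY2⟩ | ⟨hY1, B, hB, rfl⟩
    · rw [inter_comm]
      exact hmix Y hY1 hY2 A hA hiA hjA
    · obtain ⟨hiB, hjB⟩ := hcond B hB hY1
      rw [compress_singleton hiB hjB]
      exact hboth A hA B hB hiA hjA hiB hjB

def sMeasure (𝒜 : Finset (Finset (Fin n))) : ℕ := ∑ A ∈ 𝒜, ∑ a ∈ A, 2 ^ (a : ℕ)

lemma sMeasure_compression_lt {i j : Fin n} (hij : i < j) (𝒜 : Finset (Finset (Fin n)))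
    (hne : 𝓒 {i} {j} 𝒜 ≠ 𝒜) : sMeasure (𝓒 {i} {j} 𝒜) < sMeasure 𝒜 := by
  classical
  rw [UV.compression] at hne ⊢
  have q : ∀ Q ∈ 𝒜.filter (fun A => UV.compress {i} {j} A ∉ 𝒜),
      UV.compress {i} {j} Q ≠ Q := by
    simp_rw [mem_filter]
    rintro Q ⟨hQ1, hQ2⟩ hE
    exact hQ2 (by rwa [hE])
  have uA : 𝒜.filter (fun A => UV.compress {i} {j} A ∈ 𝒜) ∪
      𝒜.filter (fun A => UV.compress {i} {j} A ∉ 𝒜) = 𝒜 := filter_union_filter_not_eq _ _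
  have ne₂ : (𝒜.filter (fun A => UV.compress {i} {j} A ∉ 𝒜)).Nonempty := by
    refine nonempty_iff_ne_empty.2 fun z => hne ?_
    rw [filter_image, z, image_empty, union_empty]
    rwa [z, union_empty] at uA
  rw [sMeasure, sMeasure, sum_union UV.compress_disjoint]
  conv_rhs => rw [← uA]
  rw [sum_union (disjoint_filter_filter_not _ _ _), add_lt_add_iff_left, filter_image,
    sum_image UV.compress_injOn]
  refine sum_lt_sum_of_nonempty ne₂ fun A hA => ?_
  have hQ := q A hA
  have hA𝒜 := (mem_filter.1 hA).1
  have hc : i ∉ A ∧ j ∈ A := by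
    by_contra hc
    refine hQ ?_
    rw [UV.compress, if_neg]
    rintro ⟨h1, h2⟩
    exact hc ⟨by simpa using h1, by simpa using h2⟩
  obtain ⟨hiA, hjA⟩ := hc
  rw [compress_singleton hiA hjA]
  have h1 : ∑ a ∈ insert i (A.erase j), 2 ^ (a : ℕ) =
      2 ^ (i : ℕ) + ∑ a ∈ A.erase j, 2 ^ (a : ℕ) := sum_insert (by simp [hiA])
  have h2 : ∑ a ∈ A.erase j, 2 ^ (a : ℕ) + 2 ^ (j : ℕ) = ∑ a ∈ A, 2 ^ (a : ℕ) :=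
    sum_erase_add _ _ hjA
  have h3 : (2 : ℕ) ^ (i : ℕ) < 2 ^ (j : ℕ) := Nat.pow_lt_pow_right one_lt_two hij
  omega

lemma exists_shifted (t k : ℕ) :
    ∀ N (𝒜 : Finset (Finset (Fin n))), sMeasure 𝒜 ≤ N →
    (∀ A ∈ 𝒜, #A = k) → (∀ A ∈ 𝒜, ∀ B ∈ 𝒜, t ≤ #(A ∩ B)) →
    ∃ ℬ : Finset (Finset (Fin n)), #ℬ = #𝒜 ∧ (∀ A ∈ ℬ, #A = k) ∧
      (∀ A ∈ ℬ, ∀ B ∈ ℬ, t ≤ #(A ∩ B)) ∧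
      ∀ i j : Fin n, i < j → IsCompressed {i} {j} ℬ := by
  intro N
  induction N with
  | zero =>
    intro 𝒜 hm hs hint
    by_cases hc : ∀ i j : Fin n, i < j → IsCompressed {i} {j} 𝒜
    · exact ⟨𝒜, rfl, hs, hint, hc⟩
    · push_neg at hc
      obtain ⟨i, j, hij, hnc⟩ := hc
      have := sMeasure_compression_lt hij 𝒜 hnc
      omega
  | succ N ih =>
    intro 𝒜 hm hs hint
    by_cases hc : ∀ i j : Fin n, i < j → IsCompressed {i} {j} 𝒜
    · exact ⟨𝒜, rfl, hs, hint, hc⟩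
    · push_neg at hc
      obtain ⟨i, j, hij, hnc⟩ := hc
      have hlt := sMeasure_compression_lt hij 𝒜 hnc
      have hs' : ∀ A ∈ 𝓒 {i} {j} 𝒜, #A = k := by
        intro A hA
        rw [mem_compression] at hA
        rcases hA with ⟨hA1, _⟩ | ⟨_, B, hB, rfl⟩
        · exact hs A hA1
        · rw [UV.card_compress (by simp)]
          exact hs B hB
      obtain ⟨ℬ, hb1, hb2, hb3, hb4⟩ := ih (𝓒 {i} {j} 𝒜) (by omega) hs'
        (tInt_compression t i j 𝒜 hint)
      exact ⟨ℬ, hb1.trans (UV.card_compression _ _ _), hb2, hb3, hb4⟩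
lemma inter_I {n : ℕ} (A : Finset (Fin n)) (m : ℕ) :
    A ∩ I n m = A.filter (fun x : Fin n => (x:ℕ) < m) := by
  ext x; simp [I, mem_filter, mem_inter, and_comm]

lemma shifted_bound (s ℓ : ℕ) (hn : s + 1 + ℓ ≤ n) (ℬ : Finset (Finset (Fin n)))
    (hs : ∀ A ∈ ℬ, #A = s + 1 + ℓ)
    (hint : ∀ A ∈ ℬ, ∀ B ∈ ℬ, s + 1 ≤ #(A ∩ B))
    (hshift : ∀ X ∈ ℬ, ∀ i j : Fin n, i < j → j ∈ X → i ∉ X → insert i (X.erase j) ∈ ℬ) :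
    #ℬ ≤ n.choose ℓ := by
  classical
  -- Step A: Frankl's lemma
  have frankl : ∀ A ∈ ℬ, ∃ i, i ≤ ℓ ∧ s + 1 + i ≤ #(A ∩ I n (s + 1 + 2 * i)) := by
    intro A hA
    by_contra hcon
    push_neg at hcon
    have hAcard := hs A hA
    have h1 : ¬ A ⊆ I n (s + 1 + 2 * ℓ) := by
      intro hsub
      have hEq : A ∩ I n (s + 1 + 2 * ℓ) = A := inter_eq_left.2 hsub
      have h2 := hcon ℓ le_rfl
      rw [hEq, hAcard] at h2
      omega
    obtain ⟨a0, ha0A, ha0I⟩ := not_subset.1 h1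
    have hn2 : s + 1 + 2 * ℓ + 1 ≤ n := by
      have h3 := a0.2
      rw [mem_I] at ha0I
      omega
    have hcompl : #(Aᶜ) = n - (s + 1 + ℓ) := by
      rw [card_compl, hAcard, Fintype.card_fin]
    set a := A.orderEmbOfFin hAcard with ha
    set g := Aᶜ.orderEmbOfFin hcompl with hg
    -- index validity
    have hidx : ∀ r : ℕ, r ≤ ℓ → s + r < s + 1 + ℓ := by omega
    have hgidx : ∀ r : ℕ, r ≤ ℓ → r < n - (s + 1 + ℓ) := by omega
    -- fact1 : lower bound on the (s+r)-th element of A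
    have fact1 : ∀ (r : ℕ) (hr : r ≤ ℓ), s + 1 + 2 * r ≤ (a ⟨s + r, hidx r hr⟩ : ℕ) := by
      intro r hr
      apply le_emb_of_card_filter A hAcard
      have h4 := hcon r (by omega)
      rw [inter_I] at h4
      show #(A.filter (fun x : Fin n => (x:ℕ) < s + 1 + 2 * r)) ≤ s + r
      omega
    -- partition count
    have hpart : ∀ b : Fin n,
        #(A.filter (fun x => x < b)) + #(Aᶜ.filter (fun x => x < b)) = (b : ℕ) := by
      intro b
      have h1' : A.filter (fun x => x < b) ∪ Aᶜ.filter (fun x => x < b)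
          = univ.filter (fun x => x < b) := by
        rw [← filter_union, union_compl]
      have h2' : Disjoint (A.filter (fun x => x < b)) (Aᶜ.filter (fun x => x < b)) :=
        disjoint_filter_filter disjoint_compl_right
      rw [← card_union_of_disjoint h2', h1']
      have h3' : univ.filter (fun x : Fin n => x < b) = I n (b : ℕ) := by
        ext x
        simp only [I, mem_filter, mem_univ, true_and]
        exact Iff.rfl
      rw [h3', card_I b.2.le]
    -- fact2 : the r-th free element is below the (s+r)-th element of A
    have fact2 : ∀ (r : ℕ) (hr : r ≤ ℓ),
        g ⟨r, hgidx r hr⟩ < a ⟨s + r, hidx r hr⟩ := by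
      intro r hr
      apply emb_lt_of_card_filter
      have h4 := hpart (a ⟨s + r, hidx r hr⟩)
      have h5 : #(A.filter (fun x => x < a ⟨s + r, hidx r hr⟩)) = s + r :=
        card_filter_lt_emb A hAcard ⟨s + r, hidx r hr⟩
      have h6 := fact1 r hr
      show r + 1 ≤ #(Aᶜ.filter (fun x => x < a ⟨s + r, hidx r hr⟩))
      omega
    -- main move induction
    have main : ∀ r : ℕ, r ≤ ℓ + 1 →
        ((A \ (univ.filter (fun q : Fin (s + 1 + ℓ) => s ≤ (q:ℕ) ∧ (q:ℕ) < s + r)).image a) ∪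
          (univ.filter (fun q : Fin (n - (s + 1 + ℓ)) => (q:ℕ) < r)).image g) ∈ ℬ := by
      intro r
      induction r with
      | zero =>
        intro _
        have e1 : (univ.filter (fun q : Fin (s + 1 + ℓ) => s ≤ (q:ℕ) ∧ (q:ℕ) < s + 0)) = ∅ :=
          filter_false_of_mem (by intro q _; omega)
        have e2 : (univ.filter (fun q : Fin (n - (s + 1 + ℓ)) => (q:ℕ) < 0)) = ∅ :=
          filter_false_of_mem (by intro q _; omega)
        rw [e1, e2, image_empty, image_empty, sdiff_empty, union_empty]
        exact hA
      | succ r ih =>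
        intro hr1
        have hr : r ≤ ℓ := by omega
        have hSr := ih (by omega)
        set S := (A \ (univ.filter (fun q : Fin (s + 1 + ℓ) => s ≤ (q:ℕ) ∧ (q:ℕ) < s + r)).image a) ∪
          (univ.filter (fun q : Fin (n - (s + 1 + ℓ)) => (q:ℕ) < r)).image g with hS
        have haS : a ⟨s + r, hidx r hr⟩ ∈ S := by
          rw [hS]
          apply mem_union_left
          rw [mem_sdiff]
          refine ⟨A.orderEmbOfFin_mem hAcard _, ?_⟩
          rw [mem_image]
          rintro ⟨q, hq, hq2⟩
          rw [mem_filter] at hq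
          have := (A.orderEmbOfFin hAcard).injective hq2
      -- q = ⟨s+r⟩
          have : (q : ℕ) = s + r := by rw [this]
          omega
        have hgS : g ⟨r, hgidx r hr⟩ ∉ S := by
          rw [hS]
          rw [mem_union]
          rintro (hmem | hmem)
          · rw [mem_sdiff] at hmem
            have : g ⟨r, hgidx r hr⟩ ∈ Aᶜ := Aᶜ.orderEmbOfFin_mem hcompl _
            rw [mem_compl] at this
            exact this hmem.1
          · rw [mem_image] at hmem
            obtain ⟨q, hq, hq2⟩ := hmem
            rw [mem_filter] at hq
            have := (Aᶜ.orderEmbOfFin hcompl).injective hq2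
            have : (q : ℕ) = r := by rw [this]
            omega
        have hstep := hshift S hSr (g ⟨r, hgidx r hr⟩) (a ⟨s + r, hidx r hr⟩)
          (fact2 r hr) haS hgS
        have hEq : insert (g ⟨r, hgidx r hr⟩) (S.erase (a ⟨s + r, hidx r hr⟩)) =
            (A \ (univ.filter (fun q : Fin (s + 1 + ℓ) => s ≤ (q:ℕ) ∧ (q:ℕ) < s + (r+1))).image a) ∪
            (univ.filter (fun q : Fin (n - (s + 1 + ℓ)) => (q:ℕ) < r + 1)).image g := by
          rw [hS]
          ext x
          simp only [mem_insert, mem_erase, mem_union, mem_sdiff, mem_image, mem_filter,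
            mem_univ, true_and]
          constructor
          · rintro (rfl | ⟨hne, (⟨hxA, hnq⟩ | ⟨q, hq, rfl⟩)⟩)
            · exact Or.inr ⟨⟨r, hgidx r hr⟩, Nat.lt_succ_self r, rfl⟩
            · refine Or.inl ⟨hxA, ?_⟩
              rintro ⟨q, hq, rfl⟩
              by_cases hq3 : (q : ℕ) < s + r
              · exact hnq ⟨q, ⟨hq.1, hq3⟩, rfl⟩
              · have hqv : (q : ℕ) = s + r := by omega
                have : q = ⟨s + r, hidx r hr⟩ := Fin.ext hqv
                exact hne (by rw [this])
            · exact Or.inr ⟨q, by omega, rfl⟩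
          · rintro (⟨hxA, hnq⟩ | ⟨q, hq, rfl⟩)
            · refine Or.inr ⟨?_, Or.inl ⟨hxA, ?_⟩⟩
              · rintro rfl
                exact hnq ⟨⟨s + r, hidx r hr⟩, ⟨Nat.le_add_right s r, Nat.lt_succ_self _⟩, rfl⟩
              · rintro ⟨q, hq, rfl⟩
                exact hnq ⟨q, ⟨hq.1, by omega⟩, rfl⟩
            · by_cases hqr : (q : ℕ) = r
              · have : q = ⟨r, hgidx r hr⟩ := Fin.ext hqr
                exact Or.inl (by rw [this])
              · refine Or.inr ⟨?_, Or.inr ⟨q, by omega, rfl⟩⟩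
                intro hgq
                have h7 : g q ∈ Aᶜ := Aᶜ.orderEmbOfFin_mem hcompl _
                have h8 : a ⟨s + r, hidx r hr⟩ ∈ A := A.orderEmbOfFin_mem hAcard _
                rw [hgq] at h7
                rw [mem_compl] at h7
                exact h7 h8
        rw [hEq] at hstep
        exact hstep
    -- conclude contradiction
    have hB := main (ℓ + 1) le_rfl
    have hint' := hint A hA _ hB
    have hsub2 : A ∩ ((A \ (univ.filter (fun q : Fin (s + 1 + ℓ) => s ≤ (q:ℕ) ∧ (q:ℕ) < s + (ℓ+1))).image a) ∪
          (univ.filter (fun q : Fin (n - (s + 1 + ℓ)) => (q:ℕ) < ℓ + 1)).image g) ⊆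
        (univ.filter (fun q : Fin (s + 1 + ℓ) => (q:ℕ) < s)).image a := by
      intro x hx
      rw [mem_inter, mem_union] at hx
      obtain ⟨hxA, hx2 | hx2⟩ := hx
      · rw [mem_sdiff] at hx2
        have hxr : x ∈ Set.range a := by
          rw [ha, A.range_orderEmbOfFin hAcard]
          exact hxA
        obtain ⟨q, rfl⟩ := hxr
        rw [mem_image]
        refine ⟨q, ?_, rfl⟩
        rw [mem_filter]
        refine ⟨mem_univ _, ?_⟩
        by_contra hq
        push_neg at hq
        refine hx2.2 ?_
        rw [mem_image]
        exact ⟨q, mem_filter.2 ⟨mem_univ _, hq, by have := q.2; omega⟩, rfl⟩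
      · exfalso
        rw [mem_image] at hx2
        obtain ⟨q, _, rfl⟩ := hx2
        have h7 : g q ∈ Aᶜ := Aᶜ.orderEmbOfFin_mem hcompl _
        rw [mem_compl] at h7
        exact h7 hxA
    have hcard2 := card_le_card hsub2
    have hcard3 := card_image_le (s := univ.filter (fun q : Fin (s + 1 + ℓ) => (q:ℕ) < s)) (f := a)
    have hcard4 : #(univ.filter (fun q : Fin (s + 1 + ℓ) => (q:ℕ) < s)) = s := by
      have : (univ.filter (fun q : Fin (s + 1 + ℓ) => (q:ℕ) < s)) = I (s + 1 + ℓ) s := rfl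
      rw [this, card_I (by omega)]
    omega
  -- Step B: minimal index and injection
  have hmin : ∀ A ∈ ℬ, ∃ i, i ≤ ℓ ∧ s + 1 + i ≤ #(A ∩ I n (s + 1 + 2 * i)) ∧
      ∀ i', i' < i → #(A ∩ I n (s + 1 + 2 * i')) < s + 1 + i' := by
    intro A hA
    obtain ⟨i0, hi0ℓ, hi0⟩ := frankl A hA
    have hex : ∃ i, s + 1 + i ≤ #(A ∩ I n (s + 1 + 2 * i)) := ⟨i0, hi0⟩
    refine ⟨Nat.find hex, le_trans (Nat.find_min' hex hi0) hi0ℓ, Nat.find_spec hex, ?_⟩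
    intro i' hi'
    have := Nat.find_min hex hi'
    omega
  choose! iF hiℓ hige himin using hmin
  have hle_n : ∀ A ∈ ℬ, s + 1 + 2 * iF A ≤ n := by
    intro A hA
    rcases Nat.eq_zero_or_pos (iF A) with h0 | hpos
    · rw [h0]; omega
    · by_contra hgt
      push_neg at hgt
      have hi'lt : iF A - 1 < iF A := by omega
      have hsmall := himin A hA (iF A - 1) hi'lt
      have houts : #(A \ I n (s + 1 + 2 * (iF A - 1))) ≤ 1 := by
        refine card_le_one.2 ?_
        intro x hx y hy
        rw [mem_sdiff, mem_I] at hx hy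
        have hxn := x.2
        have hyn := y.2
        apply Fin.ext
        omega
      have hsplit : #(A ∩ I n (s + 1 + 2 * (iF A - 1))) + #(A \ I n (s + 1 + 2 * (iF A - 1))) = #A :=
        card_inter_add_card_sdiff _ _
      have hAc := hs A hA
      have hiℓ' := hiℓ A hA
      omega
  have hexact : ∀ A ∈ ℬ, #(A ∩ I n (s + 1 + 2 * iF A)) = s + 1 + iF A := by
    intro A hA
    have h1 := hige A hA
    rcases Nat.eq_zero_or_pos (iF A) with h0 | hpos
    · have h3 := card_le_card
        (show A ∩ I n (s + 1 + 2 * iF A) ⊆ I n (s + 1 + 2 * iF A) from inter_subset_right)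
      rw [card_I (hle_n A hA)] at h3
      omega
    · have hsmall := himin A hA (iF A - 1) (by omega)
      have hsub : A ∩ I n (s + 1 + 2 * iF A) ⊆
          (A ∩ I n (s + 1 + 2 * (iF A - 1))) ∪ (I n (s + 1 + 2 * iF A) \ I n (s + 1 + 2 * (iF A - 1))) := by
        intro x hx
        rw [mem_inter] at hx
        by_cases hxi : x ∈ I n (s + 1 + 2 * (iF A - 1))
        · exact mem_union_left _ (mem_inter.2 ⟨hx.1, hxi⟩)
        · exact mem_union_right _ (mem_sdiff.2 ⟨hx.2, hxi⟩)
      have hcd := card_le_card hsub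
      have hcu := card_union_le (A ∩ I n (s + 1 + 2 * (iF A - 1)))
        (I n (s + 1 + 2 * iF A) \ I n (s + 1 + 2 * (iF A - 1)))
      have hsd : #(I n (s + 1 + 2 * iF A) \ I n (s + 1 + 2 * (iF A - 1))) = 2 := by
        rw [card_sdiff_of_subset (I_subset (by omega)), card_I (hle_n A hA),
          card_I (by have := hle_n A hA; omega)]
        omega
      omega
  have hfcard : ∀ A ∈ ℬ, #(A ∆ I n (s + 1 + 2 * iF A)) = ℓ := by
    intro A hA
    have h1 : #(A ∩ I n (s + 1 + 2 * iF A)) + #(A \ I n (s + 1 + 2 * iF A)) = #A :=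
      card_inter_add_card_sdiff _ _
    have h2 : #(I n (s + 1 + 2 * iF A) ∩ A) + #(I n (s + 1 + 2 * iF A) \ A) =
        #(I n (s + 1 + 2 * iF A)) := card_inter_add_card_sdiff _ _
    have h3 : #(A ∆ I n (s + 1 + 2 * iF A)) =
        #(A \ I n (s + 1 + 2 * iF A)) + #(I n (s + 1 + 2 * iF A) \ A) := by
      rw [symmDiff_def, sup_eq_union]
      exact card_union_of_disjoint disjoint_sdiff_sdiff
    have h4 := hexact A hA
    have h5 : #(I n (s + 1 + 2 * iF A) ∩ A) = s + 1 + iF A := by rw [inter_comm]; exact h4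
    have h6 := card_I (n := n) (hle_n A hA)
    have h7 := hs A hA
    have h8 := hiℓ A hA
    omega
  have hid : ∀ (B : Finset (Fin n)) (iB m : ℕ), m ≤ s + 1 + 2 * iB →
      B ∩ I n m = I n m \ (B ∆ I n (s + 1 + 2 * iB)) := by
    intro B iB m hm
    ext x
    simp only [mem_inter, mem_sdiff, mem_symmDiff, mem_I]
    constructor
    · rintro ⟨hxB, hxm⟩
      refine ⟨hxm, ?_⟩
      rintro (⟨-, hni⟩ | ⟨-, hnB⟩)
      · exact hni (by omega)
      · exact hnB hxB
    · rintro ⟨hxm, hnd⟩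
      refine ⟨?_, hxm⟩
      by_contra hxB
      exact hnd (Or.inr ⟨by omega, hxB⟩)
  have hkey : ∀ A ∈ ℬ, ∀ A' ∈ ℬ,
      A ∆ I n (s + 1 + 2 * iF A) = A' ∆ I n (s + 1 + 2 * iF A') → iF A < iF A' → False := by
    intro A hA A' hA' hff hlt
    have e1 := hid A (iF A) (s + 1 + 2 * iF A) le_rfl
    have e2 := hid A' (iF A') (s + 1 + 2 * iF A) (by omega)
    have hcontr : #(A' ∩ I n (s + 1 + 2 * iF A)) = s + 1 + iF A := by
      rw [e2, ← hff, ← e1]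
      exact hexact A hA
    have := himin A' hA' (iF A) hlt
    omega
  have hcount : #ℬ ≤ #(powersetCard ℓ (univ : Finset (Fin n))) := by
    apply card_le_card_of_injOn (fun A => A ∆ I n (s + 1 + 2 * iF A))
    · intro A hA
      rw [mem_coe, mem_powersetCard]
      exact ⟨subset_univ _, hfcard A hA⟩
    · intro A hA A' hA' hff
      rw [mem_coe] at hA hA'
      simp only at hff
      have hii : iF A = iF A' := by
        by_contra hne
        rcases Nat.lt_or_ge (iF A) (iF A') with h | h
        · exact hkey A hA A' hA' hff h
        · exact hkey A' hA' A hA hff.symm (by omega)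
      calc A = (A ∆ I n (s + 1 + 2 * iF A)) ∆ I n (s + 1 + 2 * iF A) :=
            (symmDiff_symmDiff_cancel_right _ _).symm
        _ = (A' ∆ I n (s + 1 + 2 * iF A')) ∆ I n (s + 1 + 2 * iF A') := by rw [hff, hii]
        _ = A' := symmDiff_symmDiff_cancel_right _ _
  rwa [card_powersetCard, card_univ, Fintype.card_fin] at hcount



end Stmt3Aux

theorem stmt_3 (n t ℓ : ℕ) (hn : 0 < n) (ht : 0 < t) (hℓ : t + ℓ ≤ n)
    (F : Finset (Finset (Fin n)))
    (hInt : ∀ A ∈ F, ∀ B ∈ F, t ≤ (A ∩ B).card) :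
    (F.filter (fun A => A.card = t + ℓ)).card ≤ n.choose ℓ := by
  classical
  obtain ⟨s, rfl⟩ : ∃ s, t = s + 1 := ⟨t - 1, by omega⟩
  set 𝒜 := F.filter (fun A => A.card = s + 1 + ℓ) with h𝒜
  have hs : ∀ A ∈ 𝒜, A.card = s + 1 + ℓ := fun A hA => (Finset.mem_filter.1 hA).2
  have hint2 : ∀ A ∈ 𝒜, ∀ B ∈ 𝒜, s + 1 ≤ (A ∩ B).card := fun A hA B hB =>
    hInt A (Finset.mem_filter.1 hA).1 B (Finset.mem_filter.1 hB).1
  obtain ⟨ℬ, hb1, hb2, hb3, hb4⟩ :=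
    Stmt3Aux.exists_shifted (s + 1) (s + 1 + ℓ) (Stmt3Aux.sMeasure 𝒜) 𝒜 le_rfl hs hint2
  have hshift : ∀ X ∈ ℬ, ∀ i j : Fin n, i < j → j ∈ X → i ∉ X →
      insert i (X.erase j) ∈ ℬ := by
    intro X hX i j hij hjX hiX
    have h := UV.compress_mem_compression (u := ({i} : Finset (Fin n))) (v := {j}) hX
    rw [(hb4 i j hij).eq] at h
    rwa [Stmt3Aux.compress_singleton hiX hjX] at h
  have hfin := Stmt3Aux.shifted_bound s ℓ hℓ ℬ hb2 hb3 hshift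
  omega
end

section
/- Let A ⊆ ([n] choose a) and B ⊆ ([n] choose b) be cross-intersecting families (every A ∈ A and B ∈ B satisfy A ∩ B ≠ ∅), with a + b ≤ n. Then |A|/C(n,a) + |B|/C(n,b) ≤ 1. -/
open Finset Equiv

section aux
variable {α : Type*} [Fintype α] [DecidableEq α]

omit [Fintype α] in
lemma perm_image_eq_iff (σ : Equiv.Perm α) (I S : Finset α) (h : I.card = S.card) :
    I.image σ = S ↔ ∀ x, σ x ∈ S ↔ x ∈ I := by
  constructor
  · rintro rfl
    intro x
    constructor
    · intro hx
      obtain ⟨y, hy, hxy⟩ := Finset.mem_image.1 hx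
      rwa [← σ.injective hxy]
    · intro hx; exact Finset.mem_image_of_mem _ hx
  · intro hx
    apply Finset.eq_of_subset_of_card_le
    · intro y hy
      obtain ⟨x, hxI, rfl⟩ := Finset.mem_image.1 hy
      exact (hx x).2 hxI
    · rw [Finset.card_image_of_injective _ σ.injective, h]

lemma card_perm_stab (I : Finset α) :
    (Finset.univ.filter fun σ : Equiv.Perm α => I.image σ = I).card
      = Nat.factorial I.card * Nat.factorial (Fintype.card α - I.card) := by
  classical
  rw [← Fintype.card_subtype]
  have e : {σ : Equiv.Perm α // I.image σ = I} ≃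
      {g : Equiv.Perm α // (fun x => decide (x ∈ I)) ∘ g = (fun x => decide (x ∈ I))} := by
    apply Equiv.subtypeEquivRight
    intro σ
    rw [perm_image_eq_iff σ I I rfl, funext_iff]
    simp [decide_eq_decide]
  rw [Fintype.card_congr e, DomMulAct.stabilizer_card]
  rw [Fintype.prod_bool]
  have h1 : Fintype.card {x // decide (x ∈ I) = true} = I.card := by
    simp [Fintype.card_subtype]
  have h2 : Fintype.card {x // decide (x ∈ I) = false} = Fintype.card α - I.card := by
    simp only [decide_eq_false_iff_not]
    rw [Fintype.card_subtype_compl]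
    simp [Fintype.card_subtype]
  rw [h1, h2, Nat.mul_comm]

lemma exists_perm_image (I S : Finset α) (h : I.card = S.card) :
    ∃ σ : Equiv.Perm α, I.image σ = S := by
  classical
  have h1 : Fintype.card {x // x ∈ I} = Fintype.card {x // x ∈ S} := by
    simp [Fintype.card_coe, h]
  have h2 : Fintype.card {x // ¬ x ∈ I} = Fintype.card {x // ¬ x ∈ S} := by
    rw [Fintype.card_subtype_compl, Fintype.card_subtype_compl]
    simp [Fintype.card_coe, h]
  obtain ⟨e⟩ := Fintype.card_eq.1 h1
  obtain ⟨f⟩ := Fintype.card_eq.1 h2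
  refine ⟨(Equiv.sumCompl (· ∈ I)).symm.trans ((e.sumCongr f).trans (Equiv.sumCompl (· ∈ S))), ?_⟩
  apply Finset.eq_of_subset_of_card_le
  · intro y hy
    obtain ⟨x, hxI, rfl⟩ := Finset.mem_image.1 hy
    simp only [Equiv.trans_apply, Equiv.sumCompl_symm_apply_of_pos (p := (· ∈ I)) hxI,
      Equiv.sumCongr_apply, Sum.map_inl, Equiv.sumCompl_apply_inl]
    exact (e ⟨x, hxI⟩).2
  · rw [Finset.card_image_of_injective _ (Equiv.injective _), h]

lemma card_perm_image (I S : Finset α) (h : I.card = S.card) :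
    (Finset.univ.filter fun σ : Equiv.Perm α => I.image σ = S).card
      = Nat.factorial I.card * Nat.factorial (Fintype.card α - I.card) := by
  classical
  obtain ⟨σ0, hσ0⟩ := exists_perm_image I S h
  rw [← card_perm_stab I]
  apply Finset.card_bij' (fun σ _ => σ0⁻¹ * σ) (fun τ _ => σ0 * τ)
  · intro σ hσ
    simp only [Finset.mem_filter, Finset.mem_univ, true_and] at hσ ⊢
    have h1 : I.image ⇑(σ0⁻¹ * σ) = (I.image ⇑σ).image ⇑σ0⁻¹ := by
      rw [Finset.image_image]; rfl
    rw [h1, hσ, ← hσ0, Finset.image_image]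
    have h2 : ⇑σ0⁻¹ ∘ ⇑σ0 = id := by funext x; simp
    rw [h2, Finset.image_id]
  · intro τ hτ
    simp only [Finset.mem_filter, Finset.mem_univ, true_and] at hτ ⊢
    have h1 : I.image ⇑(σ0 * τ) = (I.image ⇑τ).image ⇑σ0 := by
      rw [Finset.image_image]; rfl
    rw [h1, hτ, hσ0]
  · intro σ _; simp [mul_assoc]
  · intro τ _; simp [← mul_assoc]

/-- count of permutations whose image of a fixed `a`-set lies in a family of `a`-sets -/
lemma card_perm_family (I : Finset α) (A : Finset (Finset α))
    (hA : ∀ S ∈ A, S.card = I.card) :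
    (Finset.univ.filter fun σ : Equiv.Perm α => I.image σ ∈ A).card
      = A.card * (Nat.factorial I.card * Nat.factorial (Fintype.card α - I.card)) := by
  classical
  rw [Finset.card_eq_sum_card_fiberwise
    (f := fun σ : Equiv.Perm α => I.image σ) (t := A)
    (s := Finset.univ.filter fun σ : Equiv.Perm α => I.image σ ∈ A)
    (fun σ hσ => (Finset.mem_filter.1 (Finset.mem_coe.1 hσ)).2)]
  rw [Finset.sum_congr rfl (fun S hS => ?_), Finset.sum_const, smul_eq_mul]
  rw [Finset.filter_filter]
  have : (Finset.univ.filter fun σ : Equiv.Perm α => I.image σ ∈ A ∧ I.image σ = S)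
      = Finset.univ.filter fun σ : Equiv.Perm α => I.image σ = S := by
    apply Finset.filter_congr
    intro σ _
    constructor
    · exact fun h => h.2
    · exact fun h => ⟨h ▸ hS, h⟩
  rw [this, card_perm_image I S (hA S hS).symm]

end aux

theorem stmt_4 (n a b : ℕ) (ha : 0 < a) (hb : 0 < b) (hab : a + b ≤ n)
    (A : Finset (Finset (Fin n))) (B : Finset (Finset (Fin n)))
    (hA : A ⊆ Finset.univ.powersetCard a) (hB : B ⊆ Finset.univ.powersetCard b)
    (hcross : ∀ S ∈ A, ∀ T ∈ B, (S ∩ T).Nonempty) :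
    (A.card : ℝ) / (n.choose a : ℝ) + (B.card : ℝ) / (n.choose b : ℝ) ≤ 1 := by
  classical
  have han : a ≤ n := le_trans (Nat.le_add_right a b) hab
  have hbn : b ≤ n := le_trans (Nat.le_add_left b a) hab
  set I : Finset (Fin n) := Finset.univ.filter (fun i => (i : ℕ) < a) with hI
  set J : Finset (Fin n) := Finset.univ.filter (fun i => n - b ≤ (i : ℕ)) with hJ
  have hIcard : I.card = a := by
    have : I = (Finset.range a).attachFin
        (fun m hm => lt_of_lt_of_le (Finset.mem_range.1 hm) han) := by
      ext x
      simp [hI, Finset.mem_attachFin]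
    rw [this, Finset.card_attachFin, Finset.card_range]
  have hJcard : J.card = b := by
    have : J = (Finset.Ico (n - b) n).attachFin
        (fun m hm => (Finset.mem_Ico.1 hm).2) := by
      ext x
      simp [hJ, Finset.mem_attachFin, Finset.mem_Ico, x.isLt]
    rw [this, Finset.card_attachFin, Nat.card_Ico, Nat.sub_sub_self hbn]
  have hIJ : Disjoint I J := by
    rw [Finset.disjoint_left]
    intro x hxI hxJ
    rw [hI, Finset.mem_filter] at hxI
    rw [hJ, Finset.mem_filter] at hxJ
    have : a ≤ n - b := Nat.le_sub_of_add_le hab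
    omega
  set PA := Finset.univ.filter (fun σ : Equiv.Perm (Fin n) => I.image σ ∈ A) with hPA
  set PB := Finset.univ.filter (fun σ : Equiv.Perm (Fin n) => J.image σ ∈ B) with hPB
  have hPAcard : PA.card = A.card * (Nat.factorial a * Nat.factorial (n - a)) := by
    rw [hPA, card_perm_family I A (fun S hS => by
      have := hA hS
      rw [Finset.mem_powersetCard] at this
      rw [this.2, hIcard])]
    rw [hIcard, Fintype.card_fin]
  have hPBcard : PB.card = B.card * (Nat.factorial b * Nat.factorial (n - b)) := by
    rw [hPB, card_perm_family J B (fun S hS => by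
      have := hB hS
      rw [Finset.mem_powersetCard] at this
      rw [this.2, hJcard])]
    rw [hJcard, Fintype.card_fin]
  have hdisj : Disjoint PA PB := by
    rw [Finset.disjoint_left]
    intro σ hσA hσB
    rw [hPA, Finset.mem_filter] at hσA
    rw [hPB, Finset.mem_filter] at hσB
    obtain ⟨x, hx⟩ := hcross _ hσA.2 _ hσB.2
    rw [Finset.mem_inter] at hx
    obtain ⟨y, hyI, hyx⟩ := Finset.mem_image.1 hx.1
    obtain ⟨z, hzJ, hzx⟩ := Finset.mem_image.1 hx.2
    have : y = z := σ.injective (hyx.trans hzx.symm)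
    exact Finset.disjoint_left.1 hIJ hyI (this ▸ hzJ)
  have hkey : A.card * (Nat.factorial a * Nat.factorial (n - a))
      + B.card * (Nat.factorial b * Nat.factorial (n - b)) ≤ Nat.factorial n := by
    rw [← hPAcard, ← hPBcard, ← Finset.card_union_of_disjoint hdisj]
    calc (PA ∪ PB).card ≤ (Finset.univ : Finset (Equiv.Perm (Fin n))).card :=
          Finset.card_le_univ _
      _ = Nat.factorial n := by rw [Finset.card_univ, Fintype.card_perm, Fintype.card_fin]
  -- now real arithmetic
  have hna : (n.choose a : ℝ) * (Nat.factorial a * Nat.factorial (n - a)) = Nat.factorial n := by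
    rw [← Nat.cast_mul, ← Nat.cast_mul]
    norm_cast
    rw [← mul_assoc]
    exact Nat.choose_mul_factorial_mul_factorial han
  have hnb : (n.choose b : ℝ) * (Nat.factorial b * Nat.factorial (n - b)) = Nat.factorial n := by
    rw [← Nat.cast_mul, ← Nat.cast_mul]
    norm_cast
    rw [← mul_assoc]
    exact Nat.choose_mul_factorial_mul_factorial hbn
  have hca : (0:ℝ) < (n.choose a : ℝ) := by
    exact_mod_cast Nat.choose_pos han
  have hcb : (0:ℝ) < (n.choose b : ℝ) := by
    exact_mod_cast Nat.choose_pos hbn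
  have hfn : (0:ℝ) < (Nat.factorial n : ℝ) := by exact_mod_cast Nat.factorial_pos n
  have e1 : (A.card : ℝ) / (n.choose a : ℝ)
      = (A.card * (Nat.factorial a * Nat.factorial (n - a)) : ℕ) / (Nat.factorial n : ℝ) := by
    rw [div_eq_div_iff (ne_of_gt hca) (ne_of_gt hfn)]
    push_cast
    rw [← hna]
    ring
  have e2 : (B.card : ℝ) / (n.choose b : ℝ)
      = (B.card * (Nat.factorial b * Nat.factorial (n - b)) : ℕ) / (Nat.factorial n : ℝ) := by
    rw [div_eq_div_iff (ne_of_gt hcb) (ne_of_gt hfn)]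
    push_cast
    rw [← hnb]
    ring
  rw [e1, e2, ← add_div, div_le_one hfn]
  exact_mod_cast hkey
end

section
/- For integers d ≥ 3 and 2d+1 < n ≤ 4d-2, the inequality 5·C(n-4, d-2) + C(n-4, d-3) > C(n-2, d-1) holds. Consequently, the overflow bound σ(n,2d) ≤ C(n-2,d-1) fails for n < 4d-1. -/
theorem stmt_8 (n d : ℕ) (hd : 3 ≤ d) (hn1 : 2 * d + 1 < n) (hn2 : n ≤ 4 * d - 2) :
    (n - 2).choose (d - 1) < 5 * (n - 4).choose (d - 2) + (n - 4).choose (d - 3) := by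
  obtain ⟨k, rfl⟩ : ∃ k, d = k + 3 := ⟨d - 3, by omega⟩
  obtain ⟨j, rfl⟩ : ∃ j, n = j + (2 * (k + 3) + 2) := ⟨n - (2*(k+3)+2), by omega⟩
  set m := j + (2 * (k + 3) + 2) - 4 with hm
  have h2 : j + (2 * (k + 3) + 2) - 2 = m + 2 := by omega
  have h1 : k + 3 - 1 = (k + 1) + 1 := by omega
  have h3 : k + 3 - 2 = k + 1 := by omega
  have h4 : k + 3 - 3 = k := by omega
  rw [h2, h1, h3, h4]
  have pascal : (m + 2).choose (k + 2) =
      m.choose (k + 2) + 2 * m.choose (k + 1) + m.choose k := by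
    rw [show m + 2 = (m + 1) + 1 from rfl, Nat.choose_succ_succ (m+1) (k+1),
      Nat.choose_succ_succ m k, Nat.choose_succ_succ m (k+1)]
    ring
  rw [pascal]
  have hkm : k + 1 ≤ m := by omega
  have hpos : 0 < m.choose (k + 1) := Nat.choose_pos hkm
  have key : m.choose (k + 2) < 3 * m.choose (k + 1) := by
    have hid : m.choose (k + 2) * (k + 2) = m.choose (k + 1) * (m - (k + 1)) :=
      Nat.choose_succ_right_eq m (k + 1)
    have hlt : m - (k + 1) < 3 * (k + 2) := by omega
    by_contra h
    push_neg at h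
    have : 3 * m.choose (k + 1) * (k + 2) ≤ m.choose (k + 2) * (k + 2) :=
      Nat.mul_le_mul_right _ h
    rw [hid] at this
    have := Nat.le_of_mul_le_mul_left
      (by linarith [this] : m.choose (k+1) * (3 * (k + 2)) ≤ m.choose (k+1) * (m - (k+1)))
      hpos
    omega
  omega
end

section
/- For any two families F, G ⊆ 2^[n] and any i ∈ [n], the Kleitman down-shift satisfies |D_i(F) ∩ D_i(G)| ≥ |F ∩ G|. -/
theorem stmt_13 (n : ℕ) (F G : Finset (Finset (Fin n))) (i : Fin n) :
    (F ∩ G).card ≤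
      ((F.image fun A => if i ∈ A ∧ A.erase i ∉ F then A.erase i else A) ∩
        (G.image fun A => if i ∈ A ∧ A.erase i ∉ G then A.erase i else A)).card := by
  classical
  set DF := (F.image fun A => if i ∈ A ∧ A.erase i ∉ F then A.erase i else A) with hDF
  set DG := (G.image fun A => if i ∈ A ∧ A.erase i ∉ G then A.erase i else A) with hDG
  -- helper: if A ∈ H and the shift condition fails, A is in the image
  have self_mem : ∀ (H : Finset (Finset (Fin n))) (A : Finset (Fin n)),
      A ∈ H → ¬(i ∈ A ∧ A.erase i ∉ H) →
      A ∈ H.image fun A => if i ∈ A ∧ A.erase i ∉ H then A.erase i else A := by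
    intro H A hA hc
    exact Finset.mem_image.2 ⟨A, hA, by rw [if_neg hc]⟩
  have erase_mem : ∀ (H : Finset (Finset (Fin n))) (A : Finset (Fin n)),
      A ∈ H → i ∈ A →
      A.erase i ∈ H.image fun A => if i ∈ A ∧ A.erase i ∉ H then A.erase i else A := by
    intro H A hA hiA
    by_cases hE : A.erase i ∈ H
    · refine Finset.mem_image.2 ⟨A.erase i, hE, ?_⟩
      rw [if_neg]
      simp
    · exact Finset.mem_image.2 ⟨A, hA, by rw [if_pos ⟨hiA, hE⟩]⟩
  -- if A ∈ F ∩ G and i ∉ A, then A ∈ DF ∩ DG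
  have stay : ∀ A ∈ F ∩ G, A ∉ DF ∩ DG → i ∈ A := by
    intro A hA hnot
    by_contra hi
    refine hnot (Finset.mem_inter.2 ⟨?_, ?_⟩)
    · exact self_mem F A (Finset.mem_inter.1 hA).1 (fun h => hi h.1)
    · exact self_mem G A (Finset.mem_inter.1 hA).2 (fun h => hi h.1)
  apply Finset.card_le_card_of_injOn (fun A => if A ∈ DF ∩ DG then A else A.erase i)
  · intro A hA
    by_cases h : A ∈ DF ∩ DG
    · simp only [if_pos h]; exact h
    · have hiA := stay A hA h
      simp only [if_neg h]
      exact Finset.mem_inter.2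
        ⟨erase_mem F A (Finset.mem_inter.1 hA).1 hiA,
         erase_mem G A (Finset.mem_inter.1 hA).2 hiA⟩
  · intro A hA B hB hEq
    simp only at hEq
    by_cases hA' : A ∈ DF ∩ DG <;> by_cases hB' : B ∈ DF ∩ DG
    · rwa [if_pos hA', if_pos hB'] at hEq
    · -- A = B.erase i, contradiction
      rw [if_pos hA', if_neg hB'] at hEq
      exfalso
      have hiB := stay B hB hB'
      have hBE : B.erase i ∈ F := hEq ▸ (Finset.mem_inter.1 hA).1
      have hBE' : B.erase i ∈ G := hEq ▸ (Finset.mem_inter.1 hA).2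
      exact hB' (Finset.mem_inter.2
        ⟨self_mem F B (Finset.mem_inter.1 hB).1 (fun h => h.2 hBE),
         self_mem G B (Finset.mem_inter.1 hB).2 (fun h => h.2 hBE')⟩)
    · rw [if_neg hA', if_pos hB'] at hEq
      exfalso
      have hiA := stay A hA hA'
      have hAE : A.erase i ∈ F := hEq.symm ▸ (Finset.mem_inter.1 hB).1
      have hAE' : A.erase i ∈ G := hEq.symm ▸ (Finset.mem_inter.1 hB).2
      exact hA' (Finset.mem_inter.2
        ⟨self_mem F A (Finset.mem_inter.1 hA).1 (fun h => h.2 hAE),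
         self_mem G A (Finset.mem_inter.1 hA).2 (fun h => h.2 hAE')⟩)
    · rw [if_neg hA', if_neg hB'] at hEq
      have hiA := stay A hA hA'
      have hiB := stay B hB hB'
      rw [← Finset.insert_erase hiA, ← Finset.insert_erase hiB, hEq]
end

section
/- For the double ball K_A(n,u) = {K △ A : K ⊆ [n], weight condition for K in the Katona family K(n,u)} and any i ∈ [n], the down-shift satisfies D_i(K_A(n,2d)) = K_{A \ {i}}(n,2d), where K_A(n,2d) = {K ⊆ [n] : |K △ A| ≤ d} is the ball of radius d centered at A. -/
open Finset in
private lemma sd_card_toggle {n : ℕ} (K A : Finset (Fin n)) (i : Fin n)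
    (hiA : i ∈ A) (hiK : i ∈ K) :
    ((K \ A.erase i) ∪ (A.erase i \ K)).card = ((K \ A) ∪ (A \ K)).card + 1 := by
  have h : (K \ A.erase i) ∪ (A.erase i \ K) = insert i ((K \ A) ∪ (A \ K)) := by
    ext j; by_cases h : j = i <;> simp [h, hiA, hiK]
  rw [h, card_insert_of_notMem (by simp [hiA, hiK])]

open Finset in
private lemma sd_card_toggle' {n : ℕ} (K A : Finset (Fin n)) (i : Fin n)
    (hiA : i ∈ A) (hiK : i ∉ K) :
    ((K \ A) ∪ (A \ K)).card = ((K \ A.erase i) ∪ (A.erase i \ K)).card + 1 := by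
  have h : (K \ A.erase i) ∪ (A.erase i \ K) = ((K \ A) ∪ (A \ K)).erase i := by
    ext j; by_cases h : j = i <;> simp [h, hiA, hiK]
  rw [h, card_erase_of_mem (by simp [hiA, hiK])]
  have : 0 < ((K \ A) ∪ (A \ K)).card := Finset.card_pos.2 ⟨i, by simp [hiA, hiK]⟩
  omega

open Finset in
private lemma sd_card_erase {n : ℕ} (K A : Finset (Fin n)) (i : Fin n)
    (hiA : i ∈ A) (hiK : i ∈ K) :
    ((K.erase i \ A) ∪ (A \ K.erase i)).card = ((K \ A) ∪ (A \ K)).card + 1 := by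
  have h : (K.erase i \ A) ∪ (A \ K.erase i) = insert i ((K \ A) ∪ (A \ K)) := by
    ext j; by_cases h : j = i <;> simp [h, hiA, hiK]
  rw [h, card_insert_of_notMem (by simp [hiA, hiK])]

open Finset in
private lemma sd_card_insert {n : ℕ} (K A : Finset (Fin n)) (i : Fin n)
    (hiA : i ∈ A) (hiK : i ∉ K) :
    ((K \ A) ∪ (A \ K)).card = ((insert i K \ A) ∪ (A \ insert i K)).card + 1 := by
  have h : (insert i K \ A) ∪ (A \ insert i K) = ((K \ A) ∪ (A \ K)).erase i := by
    ext j; by_cases h : j = i <;> simp [h, hiA, hiK]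
  rw [h, card_erase_of_mem (by simp [hiA, hiK])]
  have : 0 < ((K \ A) ∪ (A \ K)).card := Finset.card_pos.2 ⟨i, by simp [hiA, hiK]⟩
  omega

open Finset in
private lemma sd_card_erase' {n : ℕ} (K A : Finset (Fin n)) (i : Fin n)
    (hiA : i ∉ A) (hiK : i ∈ K) :
    ((K \ A) ∪ (A \ K)).card = ((K.erase i \ A) ∪ (A \ K.erase i)).card + 1 := by
  have h : (K.erase i \ A) ∪ (A \ K.erase i) = ((K \ A) ∪ (A \ K)).erase i := by
    ext j; by_cases h : j = i <;> simp [h, hiA, hiK]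
  rw [h, card_erase_of_mem (by simp [hiA, hiK])]
  have : 0 < ((K \ A) ∪ (A \ K)).card := Finset.card_pos.2 ⟨i, by simp [hiA, hiK]⟩
  omega

theorem stmt_14 (n d : ℕ) (hd : 0 < d) (hn : 2 * d < n)
    (A : Finset (Fin n)) (i : Fin n) :
    ((Finset.univ.powerset.filter
        (fun K : Finset (Fin n) => ((K \ A) ∪ (A \ K)).card ≤ d)).image
      (fun S => if i ∈ S ∧ S.erase i ∉
          Finset.univ.powerset.filter
            (fun K : Finset (Fin n) => ((K \ A) ∪ (A \ K)).card ≤ d)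
        then S.erase i else S)) =
      Finset.univ.powerset.filter
        (fun K : Finset (Fin n) => ((K \ A.erase i) ∪ (A.erase i \ K)).card ≤ d) := by
  by_cases hiA : i ∈ A
  · ext T
    simp only [Finset.mem_image, Finset.mem_filter, Finset.mem_powerset,
      Finset.subset_univ, true_and]
    constructor
    · rintro ⟨S, hS, hfS⟩
      by_cases hc : i ∈ S ∧ ¬ ((S.erase i \ A) ∪ (A \ S.erase i)).card ≤ d
      · rw [if_pos hc] at hfS
        subst hfS
        have h1 := sd_card_erase S A i hiA hc.1
        have h2 := sd_card_toggle' (S.erase i) A i hiA (Finset.notMem_erase i S)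
        omega
      · rw [if_neg hc] at hfS
        subst hfS
        by_cases hiS : i ∈ S
        · have hle : ((S.erase i \ A) ∪ (A \ S.erase i)).card ≤ d := by tauto
          have h1 := sd_card_erase S A i hiA hiS
          have h2 := sd_card_toggle S A i hiA hiS
          omega
        · have h2 := sd_card_toggle' S A i hiA hiS
          omega
    · intro hT
      by_cases hiT : i ∈ T
      · refine ⟨T, ?_, ?_⟩
        · have h2 := sd_card_toggle T A i hiA hiT
          omega
        · rw [if_neg]
          have h1 := sd_card_erase T A i hiA hiT
          have h2 := sd_card_toggle T A i hiA hiT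
          intro hc
          exact hc.2 (by omega)
      · have h2 := sd_card_toggle' T A i hiA hiT
        by_cases hTA : ((T \ A) ∪ (A \ T)).card ≤ d
        · exact ⟨T, hTA, by rw [if_neg (by tauto)]⟩
        · refine ⟨insert i T, ?_, ?_⟩
          · have h3 := sd_card_insert T A i hiA hiT
            omega
          · rw [if_pos, Finset.erase_insert hiT]
            refine ⟨Finset.mem_insert_self i T, ?_⟩
            rw [Finset.erase_insert hiT]
            exact hTA
  · have hAe : A.erase i = A := Finset.erase_eq_of_notMem hiA
    rw [hAe]
    ext T
    simp only [Finset.mem_image, Finset.mem_filter, Finset.mem_powerset,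
      Finset.subset_univ, true_and]
    constructor
    · rintro ⟨S, hS, hfS⟩
      by_cases hiS : i ∈ S
      · have h1 := sd_card_erase' S A i hiA hiS
        rw [if_neg (fun hc => hc.2 (by omega))] at hfS
        subst hfS; exact hS
      · rw [if_neg (by tauto)] at hfS
        subst hfS; exact hS
    · intro hT
      refine ⟨T, hT, ?_⟩
      by_cases hiT : i ∈ T
      · have h1 := sd_card_erase' T A i hiA hiT
        rw [if_neg (fun hc => hc.2 (by omega))]
      · rw [if_neg (by tauto)]
end

section
/- Let F ⊆ ([n] choose k) be an initial (shift-stable) family. If the set {1,2,...,p} ∪ {p+2, p+4, ..., 2k-p} is not in F for some 0 ≤ p ≤ k-1, then |F| ≤ C(n, k-p-1). -/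
/-- `A` precedes `B` in the shifting partial order: for equal-size sets with
increasing enumerations `A = {x_1 < ... < x_k}`, `B = {y_1 < ... < y_k}`, this
is equivalent to `x_i ≤ y_i` for all `i`. -/
def Precedes (A B : Finset ℕ) : Prop :=
  ∀ m : ℕ, (B.filter (fun y => y ≤ m)).card ≤ (A.filter (fun x => x ≤ m)).card

theorem stmt_17 (n k p : ℕ) (hp : p ≤ k - 1) (hk : 0 < k) (hn : 2 * k - p ≤ n)
    (F : Finset (Finset ℕ))
    (hF : F ⊆ Finset.powersetCard k (Finset.Icc 1 n))
    (hinitial : ∀ G ∈ F, ∀ A ∈ Finset.powersetCard k (Finset.Icc 1 n),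
      Precedes A G → A ∈ F)
    (hnot : (Finset.Icc 1 p ∪ (Finset.range (k - p)).image (fun t => p + 2 * t + 2))
        ∉ F) :
    F.card ≤ n.choose (k - p - 1) := by
  classical
  have hpk : p + 1 ≤ k := by omega
  set B : Finset ℕ := Finset.Icc 1 p ∪ (Finset.range (k - p)).image (fun t => p + 2 * t + 2)
    with hBdef
  have hGsub : ∀ G ∈ F, G ⊆ Finset.Icc 1 n := fun G hG => (Finset.mem_powersetCard.1 (hF hG)).1
  have hGcard : ∀ G ∈ F, G.card = k := fun G hG => (Finset.mem_powersetCard.1 (hF hG)).2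
  have cnt_le : ∀ G ∈ F, ∀ m, (G.filter (fun x => x ≤ m)).card ≤ m := by
    intro G hG m
    have hsub : G.filter (fun x => x ≤ m) ⊆ Finset.Icc 1 m := by
      intro x hx
      rw [Finset.mem_filter] at hx
      have h1 := hGsub G hG hx.1
      rw [Finset.mem_Icc] at h1 ⊢
      omega
    have := Finset.card_le_card hsub
    simpa using this
  have cnt_le_k : ∀ G ∈ F, ∀ m, (G.filter (fun x => x ≤ m)).card ≤ k := by
    intro G hG m
    calc (G.filter (fun x => x ≤ m)).card ≤ G.card :=
          Finset.card_le_card (Finset.filter_subset _ _)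
      _ = k := hGcard G hG
  have hinj : Function.Injective (fun t : ℕ => p + 2 * t + 2) := by
    intro a b h; simp only at h; omega
  have hBmem : B ∈ Finset.powersetCard k (Finset.Icc 1 n) := by
    rw [Finset.mem_powersetCard]
    constructor
    · intro x hx
      rw [hBdef, Finset.mem_union] at hx
      rcases hx with hx | hx
      · rw [Finset.mem_Icc] at hx; rw [Finset.mem_Icc]; omega
      · obtain ⟨t, ht, rfl⟩ := Finset.mem_image.1 hx
        rw [Finset.mem_range] at ht
        rw [Finset.mem_Icc]
        omega
    · rw [hBdef, Finset.card_union_of_disjoint, Nat.card_Icc,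
        Finset.card_image_of_injective _ hinj, Finset.card_range]
      · omega
      · rw [Finset.disjoint_left]
        intro a ha hb
        rw [Finset.mem_Icc] at ha
        obtain ⟨t, ht, rfl⟩ := Finset.mem_image.1 hb
        omega
  -- every member of F "hits level p+1"
  have hex : ∀ G ∈ F, ∃ m, m + p + 1 ≤ 2 * (G.filter (fun x => x ≤ m)).card := by
    intro G hG
    have hnp : ¬ Precedes B G := fun h => hnot (hinitial G hG B hBmem h)
    rw [Precedes] at hnp
    push_neg at hnp
    obtain ⟨m, hm⟩ := hnp
    by_cases hmp : m ≤ p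
    · exfalso
      have hsub : Finset.Icc 1 m ⊆ B.filter (fun y => y ≤ m) := by
        intro x hx
        rw [Finset.mem_Icc] at hx
        rw [Finset.mem_filter, hBdef, Finset.mem_union, Finset.mem_Icc]
        exact ⟨Or.inl ⟨hx.1, by omega⟩, hx.2⟩
      have h1 := Finset.card_le_card hsub
      rw [Nat.card_Icc] at h1
      have h2 := cnt_le G hG m
      omega
    · push_neg at hmp
      by_cases hq : k - p ≤ (m - p) / 2
      · exfalso
        have hsub : B ⊆ B.filter (fun y => y ≤ m) := by
          intro x hx
          rw [Finset.mem_filter]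
          refine ⟨hx, ?_⟩
          rw [hBdef, Finset.mem_union] at hx
          rcases hx with hx | hx
          · rw [Finset.mem_Icc] at hx; omega
          · obtain ⟨t, ht, rfl⟩ := Finset.mem_image.1 hx
            rw [Finset.mem_range] at ht
            omega
        have h1 := Finset.card_le_card hsub
        have hBk : B.card = k := (Finset.mem_powersetCard.1 hBmem).2
        have h2 := cnt_le_k G hG m
        omega
      · push_neg at hq
        refine ⟨m, ?_⟩
        have hsub : Finset.Icc 1 p ∪ (Finset.range ((m - p) / 2)).image (fun t => p + 2 * t + 2)
            ⊆ B.filter (fun y => y ≤ m) := by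
          intro x hx
          rw [Finset.mem_union] at hx
          rw [Finset.mem_filter, hBdef, Finset.mem_union]
          rcases hx with hx | hx
          · rw [Finset.mem_Icc] at hx
            exact ⟨Or.inl (Finset.mem_Icc.2 hx), by omega⟩
          · obtain ⟨t, ht, rfl⟩ := Finset.mem_image.1 hx
            rw [Finset.mem_range] at ht
            exact ⟨Or.inr (Finset.mem_image.2 ⟨t, Finset.mem_range.2 (by omega), rfl⟩), by omega⟩
        have h1 := Finset.card_le_card hsub
        rw [Finset.card_union_of_disjoint, Nat.card_Icc,
          Finset.card_image_of_injective _ hinj, Finset.card_range] at h1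
        · omega
        · rw [Finset.disjoint_left]
          intro a ha hb
          rw [Finset.mem_Icc] at ha
          obtain ⟨t, ht, rfl⟩ := Finset.mem_image.1 hb
          omega
  -- first hitting time
  set mfun : Finset ℕ → ℕ := fun G =>
    if h : ∃ m, m + p + 1 ≤ 2 * (G.filter (fun x => x ≤ m)).card then Nat.find h else 0
    with hmfun
  have hspec : ∀ G ∈ F, mfun G + p + 1 ≤ 2 * (G.filter (fun x => x ≤ mfun G)).card := by
    intro G hG
    have h := hex G hG
    simp only [hmfun, dif_pos h]
    exact Nat.find_spec h
  have hmin : ∀ G ∈ F, ∀ m < mfun G,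
      ¬ (m + p + 1 ≤ 2 * (G.filter (fun x => x ≤ m)).card) := by
    intro G hG m hm
    have h := hex G hG
    simp only [hmfun, dif_pos h] at hm
    exact Nat.find_min h hm
  have hpos : ∀ G ∈ F, 1 ≤ mfun G := by
    intro G hG
    by_contra hc
    push_neg at hc
    interval_cases h : mfun G
    · have h0 := hspec G hG
      rw [h] at h0
      have hz : (G.filter (fun x => x ≤ 0)).card = 0 := by
        rw [Finset.card_eq_zero, Finset.filter_eq_empty_iff]
        intro x hx
        have := hGsub G hG hx
        rw [Finset.mem_Icc] at this
        omega
      omega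
  -- exact equality at the first hitting time
  have heq : ∀ G ∈ F, mfun G + p + 1 = 2 * (G.filter (fun x => x ≤ mfun G)).card := by
    intro G hG
    have h1 := hspec G hG
    have h2 := hpos G hG
    have h3 := hmin G hG (mfun G - 1) (by omega)
    have hstep : (G.filter (fun x => x ≤ mfun G)).card ≤
        (G.filter (fun x => x ≤ mfun G - 1)).card + 1 := by
      have hsub : G.filter (fun x => x ≤ mfun G) ⊆
          insert (mfun G) (G.filter (fun x => x ≤ mfun G - 1)) := by
        intro x hx
        rw [Finset.mem_filter] at hx
        rw [Finset.mem_insert, Finset.mem_filter]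
        by_cases hxm : x = mfun G
        · exact Or.inl hxm
        · exact Or.inr ⟨hx.1, by omega⟩
      exact (Finset.card_le_card hsub).trans (Finset.card_insert_le _ _)
    omega
  have hmn : ∀ G ∈ F, mfun G ≤ n := by
    intro G hG
    have h1 := heq G hG
    have h2 := cnt_le_k G hG (mfun G)
    omega
  -- the reflection map
  set Phi : Finset ℕ → Finset ℕ := fun G =>
    (Finset.Icc 1 (mfun G) \ G) ∪ (G \ Finset.Icc 1 (mfun G)) with hPhi
  have hmemPhi : ∀ G, ∀ x, x ∈ Phi G ↔
      ((x ∈ Finset.Icc 1 (mfun G) ∧ x ∉ G) ∨ (x ∈ G ∧ x ∉ Finset.Icc 1 (mfun G))) := by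
    intro G x
    simp only [hPhi, Finset.mem_union, Finset.mem_sdiff]
  have hPhicard : ∀ G ∈ F, (Phi G).card = k - p - 1 := by
    intro G hG
    have hdisj : Disjoint (Finset.Icc 1 (mfun G) \ G) (G \ Finset.Icc 1 (mfun G)) := by
      rw [Finset.disjoint_left]
      intro a ha hb
      rw [Finset.mem_sdiff] at ha hb
      exact ha.2 hb.1
    have h1 : Finset.Icc 1 (mfun G) \ G =
        Finset.Icc 1 (mfun G) \ (G.filter (fun x => x ≤ mfun G)) := by
      ext x
      simp only [Finset.mem_sdiff, Finset.mem_filter, Finset.mem_Icc]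
      constructor
      · rintro ⟨⟨ha, hb⟩, hc⟩
        exact ⟨⟨ha, hb⟩, fun h => hc h.1⟩
      · rintro ⟨⟨ha, hb⟩, hc⟩
        exact ⟨⟨ha, hb⟩, fun h => hc ⟨h, hb⟩⟩
    have hfsub : G.filter (fun x => x ≤ mfun G) ⊆ Finset.Icc 1 (mfun G) := by
      intro x hx
      rw [Finset.mem_filter] at hx
      have := hGsub G hG hx.1
      rw [Finset.mem_Icc] at this ⊢
      omega
    have h2 : G \ Finset.Icc 1 (mfun G) = G.filter (fun x => ¬ x ≤ mfun G) := by
      ext x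
      simp only [Finset.mem_sdiff, Finset.mem_filter, Finset.mem_Icc]
      constructor
      · rintro ⟨ha, hb⟩
        have := hGsub G hG ha
        rw [Finset.mem_Icc] at this
        exact ⟨ha, fun hle => hb ⟨this.1, hle⟩⟩
      · rintro ⟨ha, hb⟩
        exact ⟨ha, fun h => hb h.2⟩
    have h3 := Finset.card_filter_add_card_filter_not (s := G) (p := fun x => x ≤ mfun G)
    rw [hPhi]
    simp only
    rw [Finset.card_union_of_disjoint hdisj, h1, Finset.card_sdiff_of_subset hfsub, Nat.card_Icc, h2]
    have h4 := heq G hG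
    have h5 := cnt_le G hG (mfun G)
    have h6 := hGcard G hG
    omega
  have hPhimem : ∀ G ∈ F, Phi G ∈ Finset.powersetCard (k - p - 1) (Finset.Icc 1 n) := by
    intro G hG
    rw [Finset.mem_powersetCard]
    refine ⟨?_, hPhicard G hG⟩
    intro x hx
    rw [hmemPhi] at hx
    rcases hx with ⟨hx, _⟩ | ⟨hx, _⟩
    · rw [Finset.mem_Icc] at hx
      have := hmn G hG
      rw [Finset.mem_Icc]
      omega
    · exact hGsub G hG hx
  -- prefix counts of Phi G below the hitting time
  have hcross : ∀ G ∈ F, ∀ m' ≤ mfun G,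
      ((Phi G).filter (fun x => x ≤ m')).card + (G.filter (fun x => x ≤ m')).card = m' := by
    intro G hG m' hm'
    have hseq : (Phi G).filter (fun x => x ≤ m') =
        Finset.Icc 1 m' \ (G.filter (fun x => x ≤ m')) := by
      ext x
      rw [Finset.mem_filter, hmemPhi G x, Finset.mem_sdiff, Finset.mem_filter]
      simp only [Finset.mem_Icc]
      constructor
      · rintro ⟨h, hxm'⟩
        rcases h with ⟨⟨h1a, h1b⟩, h2⟩ | ⟨h1, h2⟩
        · exact ⟨⟨h1a, hxm'⟩, fun hh => h2 hh.1⟩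
        · exfalso
          have hx1 := hGsub G hG h1
          rw [Finset.mem_Icc] at hx1
          exact h2 ⟨hx1.1, by omega⟩
      · rintro ⟨⟨h1, h2⟩, h3⟩
        exact ⟨Or.inl ⟨⟨h1, by omega⟩, fun hxG => h3 ⟨hxG, h2⟩⟩, h2⟩
    have hfsub : G.filter (fun x => x ≤ m') ⊆ Finset.Icc 1 m' := by
      intro x hx
      rw [Finset.mem_filter] at hx
      have := hGsub G hG hx.1
      rw [Finset.mem_Icc] at this ⊢
      omega
    rw [hseq, Finset.card_sdiff_of_subset hfsub, Nat.card_Icc]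
    have := cnt_le G hG m'
    omega
  -- injectivity
  have hfind_le : ∀ G₁ ∈ F, ∀ G₂ ∈ F, Phi G₁ = Phi G₂ → mfun G₁ ≤ mfun G₂ →
      mfun G₂ ≤ mfun G₁ := by
    intro G₁ h1 G₂ h2 hP hle
    by_contra hlt
    push_neg at hlt
    have e1 := hcross G₁ h1 (mfun G₁) le_rfl
    have e2 := hcross G₂ h2 (mfun G₁) (le_of_lt hlt)
    rw [hP] at e1
    have hc1 := heq G₁ h1
    have hmin2 := hmin G₂ h2 (mfun G₁) hlt
    omega
  have hinjOn : ∀ G₁ ∈ F, ∀ G₂ ∈ F, Phi G₁ = Phi G₂ → G₁ = G₂ := by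
    intro G₁ h1 G₂ h2 hPeq
    have hmm : mfun G₁ = mfun G₂ := by
      rcases le_total (mfun G₁) (mfun G₂) with h | h
      · exact le_antisymm h (hfind_le G₁ h1 G₂ h2 hPeq h)
      · exact le_antisymm (hfind_le G₂ h2 G₁ h1 hPeq.symm h) h
    ext x
    have hx1 := hmemPhi G₁ x
    rw [hPeq, hmemPhi G₂ x, hmm] at hx1
    by_cases hxI : x ∈ Finset.Icc 1 (mfun G₂)
    · constructor
      · intro hxG
        by_contra hng
        have : x ∈ Finset.Icc 1 (mfun G₂) ∧ x ∉ G₂ := by tauto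
        tauto
      · intro hxG
        by_contra hng
        tauto
    · constructor
      · intro hxG
        have : x ∈ G₂ ∧ x ∉ Finset.Icc 1 (mfun G₂) := by tauto
        exact this.1
      · intro hxG
        have : x ∈ G₁ ∧ x ∉ Finset.Icc 1 (mfun G₂) := by tauto
        exact this.1
  -- conclude
  have hcard := Finset.card_le_card_of_injOn Phi (fun G hG => hPhimem G hG)
    (fun G₁ ha G₂ hb h => hinjOn G₁ (Finset.mem_coe.1 ha) G₂ (Finset.mem_coe.1 hb) h)
  rw [Finset.card_powersetCard, Nat.card_Icc] at hcard
  simpa using hcard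
end

section
/- Let F ⊆ ([n] choose k) be an initial family. If the set {p, p+2, p+4, ..., p+2k-2} is not in F for some 2 ≤ p ≤ k-1, then |F| ≤ C(n, k) - C(n-p+2, k) + C(n-p+2, k-1). -/
open Classical in
noncomputable def goodF (N k : ℕ) : Finset (Finset ℕ) :=
  (Finset.powersetCard k (Finset.Icc 1 N)).filter
    (fun Z => ∀ m, (Z.filter (fun x => x ≤ m)).card ≤ (m+1)/2)

lemma mem_goodF {N k : ℕ} {Z : Finset ℕ} :
    Z ∈ goodF N k ↔ (Z ⊆ Finset.Icc 1 N ∧ Z.card = k) ∧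
      ∀ m, (Z.filter (fun x => x ≤ m)).card ≤ (m+1)/2 := by
  classical
  simp [goodF, Finset.mem_filter, Finset.mem_powersetCard]

lemma goodF_mono {N k : ℕ} : goodF N k ⊆ goodF (N+1) k := by
  intro Z hZ
  rw [mem_goodF] at *
  exact ⟨⟨hZ.1.1.trans (Finset.Icc_subset_Icc_right (by omega)), hZ.1.2⟩, hZ.2⟩

lemma goodF_zero (N : ℕ) : ∅ ∈ goodF N 0 := by
  rw [mem_goodF]; simp

lemma insert_goodF {N j : ℕ} {Z : Finset ℕ} (hN : 2*j+1 ≤ N+1)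
    (hZ : Z ∈ goodF N j) : insert (N+1) Z ∈ goodF (N+1) (j+1) := by
  rw [mem_goodF] at *
  obtain ⟨⟨hsub, hcard⟩, hcond⟩ := hZ
  have hnot : (N+1) ∉ Z := fun h => by
    have := hsub h; rw [Finset.mem_Icc] at this; omega
  refine ⟨⟨?_, ?_⟩, ?_⟩
  · intro x hx
    rcases Finset.mem_insert.1 hx with rfl | hx
    · rw [Finset.mem_Icc]; omega
    · have := hsub hx; rw [Finset.mem_Icc] at this ⊢; omega
  · rw [Finset.card_insert_of_notMem hnot, hcard]
  · intro m
    rw [Finset.filter_insert]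
    by_cases hm : N+1 ≤ m
    · rw [if_pos hm]
      have hall : Z.filter (fun x => x ≤ m) = Z := by
        apply Finset.filter_true_of_mem
        intro x hx; have := hsub hx; rw [Finset.mem_Icc] at this; omega
      rw [Finset.card_insert_of_notMem (fun h => hnot (Finset.mem_filter.1 h).1), hall, hcard]
      omega
    · rw [if_neg hm]; exact hcond m

lemma goodF_card_step {N j : ℕ} (hN : 2*j+1 ≤ N+1) :
    (goodF N (j+1)).card + (goodF N j).card ≤ (goodF (N+1) (j+1)).card := by
  classical
  have himg : (goodF N j).image (insert (N+1)) ⊆ goodF (N+1) (j+1) := by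
    intro A hA
    obtain ⟨Z, hZ, rfl⟩ := Finset.mem_image.1 hA
    exact insert_goodF hN hZ
  have hni : ∀ Z ∈ goodF N j, (N+1) ∉ Z := by
    intro Z hZ h
    have := (mem_goodF.1 hZ).1.1 h
    rw [Finset.mem_Icc] at this; omega
  have hcardimg : ((goodF N j).image (insert (N+1))).card = (goodF N j).card := by
    apply Finset.card_image_of_injOn
    intro Z hZ Z' hZ' h
    have h1 : Finset.erase (insert (N+1) Z) (N+1) = Z := Finset.erase_insert (hni Z hZ)
    have h2 : Finset.erase (insert (N+1) Z') (N+1) = Z' := Finset.erase_insert (hni Z' hZ')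
    rw [← h1, ← h2, h]
  have hdisj : Disjoint (goodF N (j+1)) ((goodF N j).image (insert (N+1))) := by
    rw [Finset.disjoint_left]
    intro A hA hA'
    obtain ⟨Z, hZ, rfl⟩ := Finset.mem_image.1 hA'
    have := (mem_goodF.1 hA).1.1 (Finset.mem_insert_self (N+1) Z)
    rw [Finset.mem_Icc] at this; omega
  calc (goodF N (j+1)).card + (goodF N j).card
      = ((goodF N (j+1)) ∪ (goodF N j).image (insert (N+1))).card := by
        rw [Finset.card_union_of_disjoint hdisj, hcardimg]
    _ ≤ (goodF (N+1) (j+1)).card := by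
        apply Finset.card_le_card
        exact Finset.union_subset goodF_mono himg

lemma choose_anti {M j : ℕ} (h : M ≤ 2*j+1) : M.choose (j+1) ≤ M.choose j := by
  by_cases hj : M < j+1
  · rw [Nat.choose_eq_zero_of_lt hj]; exact Nat.zero_le _
  push_neg at hj
  rcases eq_or_lt_of_le h with heq | hlt
  · -- M = 2j+1
    have : M - (j+1) = j := by omega
    rw [← Nat.choose_symm hj, this]
  · -- M ≤ 2j
    have hM2j : M ≤ 2*j := by omega
    have h1 : M.choose (j+1) = M.choose (M - (j+1)) := (Nat.choose_symm hj).symm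
    have h2 : M.choose j = M.choose (M - j) := (Nat.choose_symm (by omega)).symm
    rw [h1, h2]
    have hstep : M - (j+1) < M/2 := by omega
    have := Nat.choose_le_succ_of_lt_half_left hstep
    have hrw : M - (j+1) + 1 = M - j := by omega
    rwa [hrw] at this

lemma goodF_count (N : ℕ) : ∀ k, 1 ≤ k →
    (N+1).choose k ≤ (goodF N k).card + (N+1).choose (k-1) := by
  induction N with
  | zero =>
    intro k hk
    obtain ⟨j, rfl⟩ : ∃ j, k = j+1 := ⟨k-1, by omega⟩
    simp only [Nat.add_sub_cancel]
    have h := choose_anti (M := 0+1) (j := j) (by omega)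
    omega
  | succ N ih =>
    intro k hk
    obtain ⟨j, rfl⟩ : ∃ j, k = j+1 := ⟨k-1, by omega⟩
    by_cases hbig : N + 2 ≤ 2*j+1
    · simp only [Nat.add_sub_cancel]
      have h := choose_anti (M := N+1+1) (j := j) (by omega)
      omega
    · push_neg at hbig
      have hN : 2*j+1 ≤ N+1 := by omega
      have hstep := goodF_card_step (N := N) (j := j) hN
      have ih1 := ih (j+1) (by omega)
      simp only [Nat.add_sub_cancel] at ih1
      have hps : (N+1+1).choose (j+1) = (N+1).choose j + (N+1).choose (j+1) :=
        Nat.choose_succ_succ (N+1) j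
      rcases Nat.eq_zero_or_pos j with rfl | hj
      · have h0 : 1 ≤ (goodF N 0).card := Finset.card_pos.2 ⟨∅, goodF_zero N⟩
        simp only [Nat.add_sub_cancel]
        have e1 : (N+1+1).choose (0+1) = N+2 := by simp
        have e2 : (N+1).choose (0+1) = N+1 := by simp
        have e3 : (N+1+1).choose 0 = 1 := Nat.choose_zero_right _
        have e4 : (N+1).choose 0 = 1 := Nat.choose_zero_right _
        omega
      · obtain ⟨i, rfl⟩ : ∃ i, j = i+1 := ⟨j-1, by omega⟩
        simp only [Nat.add_sub_cancel]
        have ih2 := ih (i+1) (by omega)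
        simp only [Nat.add_sub_cancel] at ih2
        have hps2 : (N+1+1).choose (i+1) = (N+1).choose i + (N+1).choose (i+1) :=
          Nat.choose_succ_succ (N+1) i
        omega

open Classical in
noncomputable def goodSet (n k p : ℕ) : Finset (Finset ℕ) :=
  (Finset.powersetCard k (Finset.Icc 1 n)).filter
    (fun A => Precedes ((Finset.range k).image (fun t => p + 2 * t)) A)

lemma mem_goodSet {n k p : ℕ} {A : Finset ℕ} :
    A ∈ goodSet n k p ↔ A ∈ Finset.powersetCard k (Finset.Icc 1 n) ∧
      Precedes ((Finset.range k).image (fun t => p + 2 * t)) A := by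
  classical
  simp [goodSet]

lemma Scount {k p m : ℕ} (hpm : p ≤ m) :
    min k ((m-p)/2 + 1) ≤
      ((((Finset.range k).image (fun t => p + 2 * t))).filter (fun x => x ≤ m)).card := by
  set r := min k ((m-p)/2+1) with hr
  have hsub : (Finset.range r).image (fun t => p + 2*t) ⊆
      (((Finset.range k).image (fun t => p + 2 * t))).filter (fun x => x ≤ m) := by
    intro x hx
    obtain ⟨t, ht, rfl⟩ := Finset.mem_image.1 hx
    rw [Finset.mem_range] at ht
    refine Finset.mem_filter.2 ⟨Finset.mem_image.2 ⟨t, Finset.mem_range.2 (by omega), rfl⟩, ?_⟩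
    have h2 : t ≤ (m-p)/2 := by omega
    have h3 := (Nat.le_div_iff_mul_le (by norm_num : (0:ℕ) < 2)).1 h2
    omega
  have hcard : ((Finset.range r).image (fun t => p + 2*t)).card = r := by
    rw [Finset.card_image_of_injective _ (fun a b h => by omega), Finset.card_range]
  calc r = _ := hcard.symm
    _ ≤ _ := Finset.card_le_card hsub

lemma translate_mem {n k p : ℕ} (hp : 1 ≤ p) (hpn : p ≤ n) {Z : Finset ℕ}
    (hZ : Z ∈ goodF (n-p+1) k) :
    Z.image (fun z => z + (p-1)) ∈ goodSet n k p := by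
  rw [mem_goodF] at hZ
  obtain ⟨⟨hsub, hcard⟩, hcond⟩ := hZ
  have hinj : Function.Injective (fun z : ℕ => z + (p-1)) := fun a b h => by
    simp only [add_left_inj] at h; exact h
  rw [mem_goodSet]
  constructor
  · rw [Finset.mem_powersetCard]
    constructor
    · intro x hx
      obtain ⟨z, hz, rfl⟩ := Finset.mem_image.1 hx
      have := hsub hz; rw [Finset.mem_Icc] at this ⊢; omega
    · rw [Finset.card_image_of_injective _ hinj, hcard]
  · intro m
    have h1 : (Z.image (fun z => z + (p-1))).filter (fun y => y ≤ m)
        = (Z.filter (fun z => z + (p-1) ≤ m)).image (fun z => z + (p-1)) := by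
      rw [Finset.filter_image]
    rw [h1, Finset.card_image_of_injective _ hinj]
    by_cases hm : p ≤ m
    · have hZm : Z.filter (fun z => z + (p-1) ≤ m) ⊆ Z.filter (fun z => z ≤ m - p + 1) := by
        intro z hz; rw [Finset.mem_filter] at *
        exact ⟨hz.1, by omega⟩
      have hb := hcond (m - p + 1)
      have hcc := Finset.card_le_card hZm
      have hlek : (Z.filter (fun z => z + (p-1) ≤ m)).card ≤ k := by
        rw [← hcard]; exact Finset.card_le_card (Finset.filter_subset _ _)
      have hs := Scount (k := k) (p := p) (m := m) hm
      omega
    · have he : Z.filter (fun z => z + (p-1) ≤ m) = ∅ := by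
        apply Finset.filter_false_of_mem
        intro z hz
        have := hsub hz; rw [Finset.mem_Icc] at this; omega
      rw [he]; simp

lemma goodSet_card {n k p : ℕ} (hp : 1 ≤ p) (hpn : p ≤ n) (hk : 1 ≤ k) :
    (n-p+2).choose k - (n-p+2).choose (k-1) ≤ (goodSet n k p).card := by
  have h1 := goodF_count (n-p+1) k hk
  have h2 : ((goodF (n-p+1) k).image (fun Z => Z.image (fun z => z + (p-1)))).card
      = (goodF (n-p+1) k).card := by
    apply Finset.card_image_of_injective
    exact Finset.image_injective (fun a b h => by simp only [add_left_inj] at h; exact h)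
  have h3 : (goodF (n-p+1) k).image (fun Z => Z.image (fun z => z + (p-1))) ⊆ goodSet n k p := by
    intro A hA
    obtain ⟨Z, hZ, rfl⟩ := Finset.mem_image.1 hA
    exact translate_mem hp hpn hZ
  have h4 := Finset.card_le_card h3
  have he : n - p + 1 + 1 = n - p + 2 := by omega
  rw [he] at h1
  omega

theorem stmt_18 (n k p : ℕ) (hp2 : 2 ≤ p) (hp : p ≤ k - 1) (hk : 0 < k)
    (hn : p + 2 * k - 2 ≤ n)
    (F : Finset (Finset ℕ))
    (hF : F ⊆ Finset.powersetCard k (Finset.Icc 1 n))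
    (hinitial : ∀ G ∈ F, ∀ A ∈ Finset.powersetCard k (Finset.Icc 1 n),
      Precedes A G → A ∈ F)
    (hnot : (Finset.range k).image (fun t => p + 2 * t) ∉ F) :
    F.card ≤ n.choose k - (n - p + 2).choose k + (n - p + 2).choose (k - 1) := by
  classical
  have hpn : p ≤ n := by omega
  have hSmem : (Finset.range k).image (fun t => p + 2 * t)
      ∈ Finset.powersetCard k (Finset.Icc 1 n) := by
    rw [Finset.mem_powersetCard]
    constructor
    · intro x hx
      obtain ⟨t, ht, rfl⟩ := Finset.mem_image.1 hx
      rw [Finset.mem_range] at ht; rw [Finset.mem_Icc]; omega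
    · rw [Finset.card_image_of_injective _ (fun a b h => by omega), Finset.card_range]
  have hdisj : Disjoint F (goodSet n k p) := by
    rw [Finset.disjoint_left]
    intro A hA hA'
    rw [mem_goodSet] at hA'
    exact hnot (hinitial A hA _ hSmem hA'.2)
  have hsub : F ∪ goodSet n k p ⊆ Finset.powersetCard k (Finset.Icc 1 n) :=
    Finset.union_subset hF (fun A hA => (mem_goodSet.1 hA).1)
  have htot : (Finset.powersetCard k (Finset.Icc 1 n)).card = n.choose k := by
    rw [Finset.card_powersetCard, Nat.card_Icc]
    congr 1
  have hcards : F.card + (goodSet n k p).card ≤ n.choose k := by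
    rw [← Finset.card_union_of_disjoint hdisj, ← htot]
    exact Finset.card_le_card hsub
  have hg := goodSet_card (n := n) (k := k) (p := p) (by omega) hpn hk
  omega
end

section
/- If F ⊆ 2^[n] is a t-intersecting initial family (closed under all shifts S_{ij} for i < j), then every F ∈ F satisfies |F ∩ [t+2i]| ≥ t + i for some i ≥ 0. -/
/-- One can select `k` elements of `T` in a "left-most" way: the selection `G`
dominates `T` in every initial segment, up to the cap `k`. -/
lemma select_least (k : ℕ) (T : Finset ℕ) (hk : k ≤ T.card) :
    ∃ G ⊆ T, G.card = k ∧
      ∀ m, min k ((T.filter (fun y => y ≤ m)).card) ≤ ((G.filter (fun y => y ≤ m)).card) := by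
  induction T using Finset.strongInduction with
  | _ T ih =>
    rcases eq_or_lt_of_le hk with h | h
    · exact ⟨T, Finset.Subset.refl T, h.symm, fun m => min_le_right _ _⟩
    · have hne : T.Nonempty := Finset.card_pos.mp (lt_of_le_of_lt (Nat.zero_le k) h)
      set x := T.max' hne with hx
      have hxT : x ∈ T := T.max'_mem hne
      have hcard : (T.erase x).card = T.card - 1 := Finset.card_erase_of_mem hxT
      have hk' : k ≤ (T.erase x).card := by omega
      obtain ⟨G, hGT, hGcard, hGmin⟩ := ih (T.erase x) (Finset.erase_ssubset hxT) hk'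
      refine ⟨G, hGT.trans (Finset.erase_subset _ _), hGcard, fun m => ?_⟩
      refine le_trans ?_ (hGmin m)
      rcases le_or_gt x m with hm | hm
      · have h1 : T.filter (fun y => y ≤ m) = T := by
          apply Finset.filter_true_of_mem
          intro y hy; exact le_trans (T.le_max' y hy) hm
        have h2 : (T.erase x).filter (fun y => y ≤ m) = T.erase x := by
          apply Finset.filter_true_of_mem
          intro y hy; exact le_trans (T.le_max' y (Finset.mem_of_mem_erase hy)) hm
        rw [h1, h2, hcard]; omega
      · have h2 : (T.erase x).filter (fun y => y ≤ m) = T.filter (fun y => y ≤ m) := by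
          ext y
          simp only [Finset.mem_filter, Finset.mem_erase]
          constructor
          · rintro ⟨⟨_, hy⟩, hym⟩; exact ⟨hy, hym⟩
          · rintro ⟨hy, hym⟩; exact ⟨⟨by omega, hy⟩, hym⟩
        rw [h2]

theorem stmt_19 (n t : ℕ) (ht : 1 ≤ t) (htn : t ≤ n)
    (F : Finset (Finset ℕ))
    (hF : F ⊆ (Finset.Icc 1 n).powerset)
    (hinitial : ∀ G ∈ F, ∀ A ∈ (Finset.Icc 1 n).powerset,
      A.card = G.card → Precedes A G → A ∈ F)
    (hInt : ∀ A ∈ F, ∀ B ∈ F, t ≤ (A ∩ B).card) :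
    ∀ S ∈ F, ∃ i : ℕ, t + i ≤ (S ∩ Finset.Icc 1 (t + 2 * i)).card := by
  intro S hS
  by_contra hcon
  push_neg at hcon
  have hSsub : S ⊆ Finset.Icc 1 n := Finset.mem_powerset.mp (hF hS)
  set k := S.card with hk
  -- notation: f m := (S.filter (· ≤ m)).card
  have hfsub : ∀ m, S.filter (fun y => y ≤ m) ⊆ Finset.Icc 1 (min m n) := by
    intro m y hy
    rw [Finset.mem_filter] at hy
    have := hSsub hy.1
    rw [Finset.mem_Icc] at this ⊢
    exact ⟨this.1, le_min hy.2 this.2⟩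
  have hfle : ∀ m, (S.filter (fun y => y ≤ m)).card ≤ min m n := by
    intro m
    calc (S.filter (fun y => y ≤ m)).card ≤ (Finset.Icc 1 (min m n)).card :=
          Finset.card_le_card (hfsub m)
      _ = min m n := by rw [Nat.card_Icc]; omega
  -- key consequence of the (negated) hypothesis
  have h2f : ∀ m, t ≤ (S.filter (fun y => y ≤ m)).card →
      2 * (S.filter (fun y => y ≤ m)).card + 1 ≤ min m n + t := by
    intro m hm
    set i := (min m n + 1 - t) / 2 with hi
    have hle := hfle m
    have hmn : t ≤ min m n := le_trans hm hle
    have hsub : S.filter (fun y => y ≤ m) ⊆ S ∩ Finset.Icc 1 (t + 2 * i) := by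
      intro y hy
      have hy' := hfsub m hy
      rw [Finset.mem_filter] at hy
      rw [Finset.mem_Icc] at hy'
      rw [Finset.mem_inter, Finset.mem_Icc]
      refine ⟨hy.1, hy'.1, ?_⟩
      have : min m n ≤ t + 2 * i := by omega
      omega
    have hc := hcon i
    have := Finset.card_le_card hsub
    omega
  -- k ≤ n and 2k bound
  have hkn : k ≤ n := by
    have := Finset.card_le_card hSsub
    rw [Nat.card_Icc] at this; omega
  have hSall : S.filter (fun y => y ≤ n) = S := by
    apply Finset.filter_true_of_mem
    intro y hy
    have := hSsub hy; rw [Finset.mem_Icc] at this; exact this.2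
  have hkt : k < t ∨ 2 * k + 1 ≤ n + t := by
    rcases lt_or_ge k t with h | h
    · exact Or.inl h
    · right
      have := h2f n (by rw [hSall]; exact h)
      rw [hSall] at this
      omega
  -- select W ⊆ S of size min (t-1) k
  obtain ⟨W, hWS, hWcard, hWmin⟩ := select_least (min (t - 1) k) S (min_le_right _ _)
  -- T = ([1,n] \ S) ∪ W
  set T := (Finset.Icc 1 n \ S) ∪ W with hT
  have hdisj : Disjoint (Finset.Icc 1 n \ S) W :=
    Finset.sdiff_disjoint.mono_right hWS
  have hTcard : T.card = (n - k) + min (t - 1) k := by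
    rw [hT, Finset.card_union_of_disjoint hdisj, Finset.card_sdiff_of_subset hSsub, Nat.card_Icc, hWcard]
    omega
  have hkT : k ≤ T.card := by
    rw [hTcard]; omega
  obtain ⟨G, hGT, hGcard, hGmin⟩ := select_least k T hkT
  -- sdiff filter computation
  have hsdf : ∀ m, ((Finset.Icc 1 n \ S).filter (fun y => y ≤ m)).card
      = min m n - (S.filter (fun y => y ≤ m)).card := by
    intro m
    have he : (Finset.Icc 1 n \ S).filter (fun y => y ≤ m)
        = Finset.Icc 1 (min m n) \ (S.filter (fun y => y ≤ m)) := by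
      ext y
      simp only [Finset.mem_filter, Finset.mem_sdiff, Finset.mem_Icc]
      constructor
      · rintro ⟨⟨⟨h1, h2⟩, h3⟩, h4⟩
        exact ⟨⟨h1, le_min h4 h2⟩, fun hc => h3 hc.1⟩
      · rintro ⟨⟨h1, h2⟩, h3⟩
        have hym : y ≤ m := le_trans h2 (min_le_left _ _)
        exact ⟨⟨⟨h1, le_trans h2 (min_le_right _ _)⟩, fun hc => h3 ⟨hc, hym⟩⟩, hym⟩
    rw [he, Finset.card_sdiff_of_subset (hfsub m), Nat.card_Icc]
    omega
  -- Precedes G S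
  have hprec : Precedes G S := by
    intro m
    refine le_trans ?_ (hGmin m)
    have hfk : (S.filter (fun y => y ≤ m)).card ≤ k :=
      Finset.card_le_card (Finset.filter_subset _ _)
    refine le_min hfk ?_
    have hTf : T.filter (fun y => y ≤ m)
        = ((Finset.Icc 1 n \ S).filter (fun y => y ≤ m)) ∪ (W.filter (fun y => y ≤ m)) := by
      rw [hT, Finset.filter_union]
    have hdisj' : Disjoint ((Finset.Icc 1 n \ S).filter (fun y => y ≤ m))
        (W.filter (fun y => y ≤ m)) :=
      hdisj.mono (Finset.filter_subset _ _) (Finset.filter_subset _ _)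
    rw [hTf, Finset.card_union_of_disjoint hdisj', hsdf m]
    have hWm := hWmin m
    have hWf : (W.filter (fun y => y ≤ m)).card ≥
        min (min (t - 1) k) ((S.filter (fun y => y ≤ m)).card) := hWm
    have hle := hfle m
    have h2 := h2f m
    omega
  -- G ∈ F
  have hTsub : T ⊆ Finset.Icc 1 n := by
    rw [hT]
    exact Finset.union_subset (Finset.sdiff_subset) (hWS.trans hSsub)
  have hGF : G ∈ F :=
    hinitial S hS G (Finset.mem_powerset.mpr (hGT.trans hTsub)) hGcard hprec
  -- contradiction with t-intersection
  have hint := hInt G hGF S hS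
  have hGSW : G ∩ S ⊆ W := by
    intro y hy
    rw [Finset.mem_inter] at hy
    have hyT := hGT hy.1
    rw [hT, Finset.mem_union, Finset.mem_sdiff] at hyT
    rcases hyT with h | h
    · exact absurd hy.2 h.2
    · exact h
  have := Finset.card_le_card hGSW
  rw [hWcard] at this
  omega
end
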